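/- arXiv:2412.20031 — 6 statements merged into one kernel-verified Lean document; each statement's English description precedes it below -/
import Mathlib

section
/- For every n ≥ 1, the number of partitions of n in which the largest part appears an odd number of times minus the number of partitions of n in which the largest part appears an even number of times is nonnegative, and this difference is strictly positive whenever n ≠ 2. -/
open Multiset

namespace Stmt0Aux

lemma sup_mem {s : Multiset ℕ} (h : s ≠ 0) : s.sup ∈ s := by
  induction s using Multiset.induction with
  | empty => simp at h
  | cons a t ih =>
    rcases eq_or_ne t 0 with rfl | ht
    · simp
    · rw [Multiset.sup_cons]
      rcases le_total a t.sup with h' | h'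
      · rw [sup_eq_right.mpr h']; exact Multiset.mem_cons_of_mem (ih ht)
      · rw [sup_eq_left.mpr h']; exact Multiset.mem_cons_self _ _

variable {n : ℕ}

lemma parts_ne (hn : 1 ≤ n) (p : n.Partition) : p.parts ≠ 0 := by
  intro h
  have := p.parts_sum
  rw [h] at this
  simp at this
  omega

lemma sup_mem_parts (hn : 1 ≤ n) (p : n.Partition) : p.parts.sup ∈ p.parts :=
  sup_mem (parts_ne hn p)

lemma one_le_sup (hn : 1 ≤ n) (p : n.Partition) : 1 ≤ p.parts.sup :=
  p.parts_pos (sup_mem_parts hn p)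

/-- For an "even" partition, the multiplicity of the largest part is at least 2. -/
lemma two_le_count (hn : 1 ≤ n) (p : n.Partition)
    (hE : Even (p.parts.count p.parts.sup)) : 2 ≤ p.parts.count p.parts.sup := by
  have h1 : 0 < p.parts.count p.parts.sup :=
    Multiset.count_pos.mpr (sup_mem_parts hn p)
  rcases hE with ⟨k, hk⟩
  omega

/-- If the largest part is 1, the partition is all ones. -/
lemma eq_replicate_of_sup_le_one (hn : 1 ≤ n) (p : n.Partition)
    (h1 : p.parts.sup ≤ 1) : p.parts = Multiset.replicate n 1 := by
  have hall : ∀ b ∈ p.parts, b = 1 := by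
    intro b hb
    have := p.parts_pos hb
    have := le_trans (Multiset.le_sup hb) h1
    omega
  have hcard : p.parts = Multiset.replicate (Multiset.card p.parts) 1 :=
    Multiset.eq_replicate_card.mpr hall
  have hsum := p.parts_sum
  rw [hcard] at hsum ⊢
  rw [Multiset.sum_replicate, smul_eq_mul, mul_one] at hsum
  rw [hsum]

/-- The underlying multiset of the injection. -/
def fparts (n : ℕ) (p : n.Partition) : Multiset ℕ :=
  if p.parts.sup ≤ 1 then {n}
  else p.parts.erase p.parts.sup + Multiset.replicate p.parts.sup 1

/-- The injection from "even" partitions into "odd" partitions. -/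
def fmap (hn : 1 ≤ n) (p : n.Partition) : n.Partition where
  parts := fparts n p
  parts_pos := by
    intro i hi
    unfold fparts at hi
    split at hi
    · rw [Multiset.mem_singleton] at hi; omega
    · rw [Multiset.mem_add] at hi
      rcases hi with hi | hi
      · exact p.parts_pos (Multiset.mem_of_mem_erase hi)
      · rw [Multiset.eq_of_mem_replicate hi]; norm_num
  parts_sum := by
    unfold fparts
    split
    · simp
    · rw [Multiset.sum_add, Multiset.sum_replicate, smul_eq_mul, mul_one]
      have h : p.parts.sup + (p.parts.erase p.parts.sup).sum = p.parts.sum := by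
        rw [← Multiset.sum_cons, Multiset.cons_erase (sup_mem_parts hn p)]
      have := p.parts_sum
      omega

lemma fmap_parts (hn : 1 ≤ n) (p : n.Partition) : (fmap hn p).parts = fparts n p := rfl

/-- In the main case (`sup ≥ 2`), the sup of the image. -/
lemma sup_fparts (hn : 1 ≤ n) (p : n.Partition)
    (hE : Even (p.parts.count p.parts.sup)) (h2 : ¬ p.parts.sup ≤ 1) :
    (fparts n p).sup = p.parts.sup := by
  have hmem : p.parts.sup ∈ p.parts.erase p.parts.sup := by
    rw [← Multiset.count_pos, Multiset.count_erase_self]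
    have := two_le_count hn p hE
    omega
  unfold fparts
  rw [if_neg h2]
  apply le_antisymm
  · rw [Multiset.sup_le]
    intro b hb
    rw [Multiset.mem_add] at hb
    rcases hb with hb | hb
    · exact Multiset.le_sup (Multiset.mem_of_mem_erase hb)
    · rw [Multiset.eq_of_mem_replicate hb]; omega
  · exact Multiset.le_sup (Multiset.mem_add.mpr (Or.inl hmem))

lemma count_one_fparts (hn : 1 ≤ n) (p : n.Partition) (h2 : ¬ p.parts.sup ≤ 1) :
    p.parts.sup ≤ (fparts n p).count 1 := by
  unfold fparts
  rw [if_neg h2, Multiset.count_add, Multiset.count_replicate, if_pos rfl]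
  omega

/-- The image of an "even" partition is "odd". -/
lemma odd_fmap (hn : 1 ≤ n) (p : n.Partition)
    (hE : Even (p.parts.count p.parts.sup)) :
    Odd ((fmap hn p).parts.count (fmap hn p).parts.sup) := by
  rw [fmap_parts]
  by_cases h2 : p.parts.sup ≤ 1
  · unfold fparts
    rw [if_pos h2]
    simp
  · rw [sup_fparts hn p hE h2]
    unfold fparts
    rw [if_neg h2, Multiset.count_add, Multiset.count_erase_self,
      Multiset.count_replicate, if_neg (by omega : ¬ (1 : ℕ) = p.parts.sup)]
    have h1 := two_le_count hn p hE
    rcases hE with ⟨k, hk⟩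
    refine ⟨k - 1, by omega⟩

/-- `n` is even when the partition is all ones with even multiplicity. -/
lemma n_even_of_sup_le_one (hn : 1 ≤ n) (p : n.Partition)
    (hE : Even (p.parts.count p.parts.sup)) (h1 : p.parts.sup ≤ 1) : Even n := by
  have hrep := eq_replicate_of_sup_le_one hn p h1
  have hsup : p.parts.sup = 1 := le_antisymm h1 (one_le_sup hn p)
  rw [hsup, hrep, Multiset.count_replicate, if_pos rfl] at hE
  exact hE

lemma fmap_injective (hn : 1 ≤ n) (p q : n.Partition)
    (hp : Even (p.parts.count p.parts.sup)) (hq : Even (q.parts.count q.parts.sup))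
    (h : fmap hn p = fmap hn q) : p = q := by
  have hpq : fparts n p = fparts n q := congrArg Nat.Partition.parts h
  have key : ∀ r : n.Partition, Even (r.parts.count r.parts.sup) → ¬ r.parts.sup ≤ 1 →
      2 ≤ (fparts n r).count 1 := by
    intro r hr h2
    have := count_one_fparts hn r h2
    have := one_le_sup hn r
    omega
  by_cases h2p : p.parts.sup ≤ 1 <;> by_cases h2q : q.parts.sup ≤ 1
  · apply Nat.Partition.ext
    rw [eq_replicate_of_sup_le_one hn p h2p, eq_replicate_of_sup_le_one hn q h2q]
  · -- p all ones, q not: contradiction via count of 1 in the image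
    exfalso
    obtain ⟨m, hm⟩ : Even n := n_even_of_sup_le_one hn p hp h2p
    have hcp : (fparts n p).count 1 = 0 := by
      unfold fparts
      rw [if_pos h2p, Multiset.count_singleton, if_neg (by omega : ¬ (1:ℕ) = n)]
    have := key q hq h2q
    rw [← hpq] at this
    omega
  · exfalso
    obtain ⟨m, hm⟩ : Even n := n_even_of_sup_le_one hn q hq h2q
    have hcq : (fparts n q).count 1 = 0 := by
      unfold fparts
      rw [if_pos h2q, Multiset.count_singleton, if_neg (by omega : ¬ (1:ℕ) = n)]
    have := key p hp h2p
    rw [hpq] at this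
    omega
  · -- main case
    have hsup : p.parts.sup = q.parts.sup := by
      rw [← sup_fparts hn p hp h2p, ← sup_fparts hn q hq h2q, hpq]
    have hpq' : p.parts.erase p.parts.sup + Multiset.replicate p.parts.sup 1 =
        q.parts.erase q.parts.sup + Multiset.replicate q.parts.sup 1 := by
      have := hpq
      unfold fparts at this
      rwa [if_neg h2p, if_neg h2q] at this
    rw [hsup] at hpq'
    have herase : p.parts.erase q.parts.sup = q.parts.erase q.parts.sup :=
      add_right_cancel hpq'
    apply Nat.Partition.ext
    rw [← Multiset.cons_erase (sup_mem_parts hn p), hsup, herase,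
      Multiset.cons_erase (sup_mem_parts hn q)]

end Stmt0Aux

open Stmt0Aux in
/-- `p^o(n) - p^e(n) ≥ 0` for `n ≥ 1`, with strict inequality unless `n = 2`,
where `p^o(n)` (resp. `p^e(n)`) counts partitions of `n` whose largest part
appears an odd (resp. even) number of times. -/
theorem stmt_0 (n : ℕ) (hn : 1 ≤ n) :
    0 ≤ (Nat.card {p : n.Partition // Odd (p.parts.count p.parts.sup)} : ℤ) -
        Nat.card {p : n.Partition // Even (p.parts.count p.parts.sup)} ∧
    (n ≠ 2 →
      0 < (Nat.card {p : n.Partition // Odd (p.parts.count p.parts.sup)} : ℤ) -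
          Nat.card {p : n.Partition // Even (p.parts.count p.parts.sup)}) := by
  classical
  set O := {p : n.Partition // Odd (p.parts.count p.parts.sup)}
  set E := {p : n.Partition // Even (p.parts.count p.parts.sup)}
  let F : E → O := fun p => ⟨fmap hn p.1, odd_fmap hn p.1 p.2⟩
  have hFinj : Function.Injective F := by
    rintro ⟨p, hp⟩ ⟨q, hq⟩ h
    exact Subtype.ext (fmap_injective hn p q hp hq (congrArg Subtype.val h))
  have hle : Nat.card E ≤ Nat.card O := by
    rw [Nat.card_eq_fintype_card, Nat.card_eq_fintype_card]
    exact Fintype.card_le_of_injective F hFinj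
  refine ⟨by push_cast; omega, ?_⟩
  intro hne
  rw [sub_pos]
  rcases eq_or_lt_of_le hn with h1 | h3
  · -- n = 1 : no "even" partitions, and one "odd" partition
    have hEempty : IsEmpty E := by
      constructor
      rintro ⟨p, hp⟩
      have h2 := two_le_count hn p hp
      have hs := one_le_sup hn p
      have hrep : Multiset.replicate (p.parts.count p.parts.sup) p.parts.sup ≤ p.parts :=
        Multiset.le_count_iff_replicate_le.mp le_rfl
      obtain ⟨u, hu⟩ := Multiset.le_iff_exists_add.mp hrep
      have hsum := p.parts_sum
      rw [hu, Multiset.sum_add, Multiset.sum_replicate, smul_eq_mul] at hsum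
      have : 2 * 1 ≤ p.parts.count p.parts.sup * p.parts.sup := Nat.mul_le_mul h2 hs
      omega
    have hOne : Nonempty O := by
      refine ⟨⟨⟨{n}, ?_, by simp⟩, ?_⟩⟩
      · intro i hi; rw [Multiset.mem_singleton] at hi; omega
      · simp
    rw [Nat.card_eq_fintype_card, Nat.card_eq_fintype_card]
    have : Fintype.card E = 0 := Fintype.card_eq_zero
    rw [this]
    exact_mod_cast Fintype.card_pos
  · -- n ≥ 3
    have h3 : 3 ≤ n := by omega
    -- the partition (n-1, 1)
    have hT : ((n-1) ::ₘ {1} : Multiset ℕ).sum = n := by simp; omega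
    let t : n.Partition := ⟨(n-1) ::ₘ {1}, by
      intro i hi
      rw [Multiset.mem_cons, Multiset.mem_singleton] at hi
      rcases hi with rfl | rfl <;> omega, hT⟩
    have htsup : t.parts.sup = n - 1 := by
      show ((n-1) ::ₘ {1} : Multiset ℕ).sup = n - 1
      rw [Multiset.sup_cons, Multiset.sup_singleton]
      exact sup_eq_left.mpr (by omega)
    have htodd : Odd (t.parts.count t.parts.sup) := by
      rw [htsup]
      show Odd (((n-1) ::ₘ {1} : Multiset ℕ).count (n-1))
      rw [Multiset.count_cons_self, Multiset.count_singleton,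
        if_neg (by omega : ¬ (n-1 : ℕ) = 1)]
      exact ⟨0, rfl⟩
    have htone : t.parts.count 1 = 1 := by
      show ((n-1) ::ₘ {1} : Multiset ℕ).count 1 = 1
      rw [Multiset.count_cons_of_ne (by omega : (1:ℕ) ≠ n - 1), Multiset.count_singleton,
        if_pos rfl]
    have hnotmem : (⟨t, htodd⟩ : O) ∉ Set.range F := by
      rintro ⟨⟨p, hp⟩, hfp⟩
      have hparts : fparts n p = t.parts := congrArg Nat.Partition.parts (congrArg Subtype.val hfp)
      by_cases h2 : p.parts.sup ≤ 1
      · have : (fparts n p).count 1 = 0 := by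
          unfold fparts
          rw [if_pos h2, Multiset.count_singleton, if_neg (by omega : ¬ (1:ℕ) = n)]
        rw [hparts, htone] at this
        omega
      · have := count_one_fparts hn p h2
        have hs := one_le_sup hn p
        have h2' : 2 ≤ p.parts.sup := by omega
        rw [hparts, htone] at this
        omega
    rw [Nat.card_eq_fintype_card, Nat.card_eq_fintype_card]
    exact_mod_cast Fintype.card_lt_of_injective_of_notMem F hFinj hnotmem
end

section
/- For every n ≥ 1, the number of partitions of n whose largest part is even, whose second largest part (if it exists) is at most half the largest part, and in which half of the largest part appears an even number of times (possibly zero times), equals the number of partitions of n whose largest part appears an even number of times. -/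
open Multiset

private lemma my_sup_mem {s : Multiset ℕ} (hs : s ≠ 0) : s.sup ∈ s := by
  induction s using Multiset.induction with
  | empty => simp at hs
  | cons a t ih =>
    rw [Multiset.sup_cons]
    rcases eq_or_ne t 0 with rfl | h
    · simp
    · rcases le_total t.sup a with hle | hle
      · simp [sup_eq_left.mpr hle]
      · simp [sup_eq_right.mpr hle, ih h]

private lemma my_sup_cons_eq {a : ℕ} {t : Multiset ℕ} (h : t.sup ≤ a) :
    (a ::ₘ t).sup = a := by
  rw [Multiset.sup_cons, sup_eq_left.mpr h]

private lemma parts_ne {n : ℕ} (hn : 1 ≤ n) (p : n.Partition) : p.parts ≠ 0 := by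
  intro h
  have := p.parts_sum
  rw [h] at this
  simp at this
  omega

private def LHS (n : ℕ) := {p : n.Partition //
    Even p.parts.sup ∧
    (∀ x ∈ p.parts.erase p.parts.sup, x ≤ p.parts.sup / 2) ∧
    Even (p.parts.count (p.parts.sup / 2))}

private def RHS (n : ℕ) := {p : n.Partition // Even (p.parts.count p.parts.sup)}

private lemma sup_pos {n : ℕ} (hn : 1 ≤ n) (p : n.Partition) : 0 < p.parts.sup :=
  p.parts_pos (my_sup_mem (parts_ne hn p))

private def fwd (n : ℕ) (hn : 1 ≤ n) (P : LHS n) : RHS n := by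
  refine ⟨⟨P.1.parts.sup / 2 ::ₘ P.1.parts.sup / 2 ::ₘ P.1.parts.erase P.1.parts.sup,
    ?_, ?_⟩, ?_⟩
  · intro i hi
    simp only [Multiset.mem_cons] at hi
    have hpos := sup_pos hn P.1
    obtain ⟨k, hk⟩ := P.2.1
    rcases hi with rfl | rfl | hi
    · omega
    · omega
    · exact P.1.parts_pos (Multiset.mem_of_mem_erase hi)
  · have hmem := my_sup_mem (parts_ne hn P.1)
    obtain ⟨k, hk⟩ := P.2.1
    have hsum : P.1.parts.sup + (P.1.parts.erase P.1.parts.sup).sum = n := by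
      have := congrArg Multiset.sum (Multiset.cons_erase hmem)
      rw [Multiset.sum_cons] at this
      rw [this, P.1.parts_sum]
    simp only [Multiset.sum_cons]
    omega
  · -- Even count of sup in the new multiset
    have hpos := sup_pos hn P.1
    have hMne : P.1.parts.sup / 2 ≠ P.1.parts.sup := by
      obtain ⟨k, hk⟩ := P.2.1; omega
    have hsup : (P.1.parts.sup / 2 ::ₘ P.1.parts.sup / 2 ::ₘ
        P.1.parts.erase P.1.parts.sup).sup = P.1.parts.sup / 2 := by
      apply my_sup_cons_eq
      rw [Multiset.sup_cons, sup_eq_left.mpr (Multiset.sup_le.mpr P.2.2.1)]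
    simp only [hsup, Multiset.count_cons_self]
    rw [Multiset.count_erase_of_ne hMne]
    obtain ⟨k, hk⟩ := P.2.2.2
    exact ⟨k + 1, by omega⟩

private lemma count_sup_two {n : ℕ} (hn : 1 ≤ n) (Q : RHS n) :
    2 ≤ Q.1.parts.count Q.1.parts.sup := by
  have hmem := my_sup_mem (parts_ne hn Q.1)
  have h1 : 1 ≤ Q.1.parts.count Q.1.parts.sup := Multiset.one_le_count_iff_mem.mpr hmem
  obtain ⟨k, hk⟩ := Q.2
  omega

private def bwd (n : ℕ) (hn : 1 ≤ n) (Q : RHS n) : LHS n := by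
  have hpos := sup_pos hn Q.1
  have hmem := my_sup_mem (parts_ne hn Q.1)
  have hc2 := count_sup_two hn Q
  have hmem2 : Q.1.parts.sup ∈ Q.1.parts.erase Q.1.parts.sup := by
    rw [← Multiset.one_le_count_iff_mem, Multiset.count_erase_self]; omega
  have hsub : ∀ x ∈ (Q.1.parts.erase Q.1.parts.sup).erase Q.1.parts.sup,
      x ≤ 2 * Q.1.parts.sup := by
    intro x hx
    have : x ≤ Q.1.parts.sup :=
      Multiset.le_sup (Multiset.mem_of_mem_erase (Multiset.mem_of_mem_erase hx))
    omega
  have hsup : (2 * Q.1.parts.sup ::ₘ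
      (Q.1.parts.erase Q.1.parts.sup).erase Q.1.parts.sup).sup = 2 * Q.1.parts.sup :=
    my_sup_cons_eq (Multiset.sup_le.mpr hsub)
  refine ⟨⟨2 * Q.1.parts.sup ::ₘ (Q.1.parts.erase Q.1.parts.sup).erase Q.1.parts.sup,
    ?_, ?_⟩, ?_, ?_, ?_⟩
  · intro i hi
    simp only [Multiset.mem_cons] at hi
    rcases hi with rfl | hi
    · omega
    · exact Q.1.parts_pos (Multiset.mem_of_mem_erase (Multiset.mem_of_mem_erase hi))
  · have e1 : Q.1.parts.sup + (Q.1.parts.erase Q.1.parts.sup).sum = n := by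
      have := congrArg Multiset.sum (Multiset.cons_erase hmem)
      rw [Multiset.sum_cons] at this
      rw [this, Q.1.parts_sum]
    have e2 : Q.1.parts.sup + ((Q.1.parts.erase Q.1.parts.sup).erase Q.1.parts.sup).sum
        = (Q.1.parts.erase Q.1.parts.sup).sum := by
      have := congrArg Multiset.sum (Multiset.cons_erase hmem2)
      rw [Multiset.sum_cons] at this
      rw [this]
    simp only [Multiset.sum_cons]
    omega
  · rw [hsup]
    exact ⟨Q.1.parts.sup, by ring⟩
  · rw [hsup]
    intro x hx
    rw [Multiset.erase_cons_head] at hx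
    have : x ≤ Q.1.parts.sup :=
      Multiset.le_sup (Multiset.mem_of_mem_erase (Multiset.mem_of_mem_erase hx))
    omega
  · rw [hsup]
    have h2 : 2 * Q.1.parts.sup / 2 = Q.1.parts.sup := by omega
    rw [h2, Multiset.count_cons_of_ne (by omega), Multiset.count_erase_self,
      Multiset.count_erase_self]
    obtain ⟨k, hk⟩ := Q.2
    exact ⟨k - 1, by omega⟩

private lemma bwd_fwd (n : ℕ) (hn : 1 ≤ n) (P : LHS n) : bwd n hn (fwd n hn P) = P := by
  apply Subtype.ext
  apply Nat.Partition.ext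
  show 2 * _ ::ₘ _ = _
  set M := P.1.parts.sup with hMdef
  set h := M / 2 with hhdef
  set t := P.1.parts.erase M with htdef
  have hsup : (h ::ₘ h ::ₘ t).sup = h := by
    apply my_sup_cons_eq
    rw [Multiset.sup_cons, sup_eq_left.mpr (Multiset.sup_le.mpr P.2.2.1)]
  have hfwd : (fwd n hn P).1.parts = h ::ₘ h ::ₘ t := rfl
  rw [hfwd, hsup, Multiset.erase_cons_head, Multiset.erase_cons_head]
  have h2 : 2 * h = M := by obtain ⟨k, hk⟩ := P.2.1; omega
  rw [h2, htdef, Multiset.cons_erase (my_sup_mem (parts_ne hn P.1))]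

private lemma fwd_bwd (n : ℕ) (hn : 1 ≤ n) (Q : RHS n) : fwd n hn (bwd n hn Q) = Q := by
  apply Subtype.ext
  apply Nat.Partition.ext
  have hpos := sup_pos hn Q.1
  have hmem := my_sup_mem (parts_ne hn Q.1)
  have hc2 := count_sup_two hn Q
  have hmem2 : Q.1.parts.sup ∈ Q.1.parts.erase Q.1.parts.sup := by
    rw [← Multiset.one_le_count_iff_mem, Multiset.count_erase_self]; omega
  have hsub : ∀ x ∈ (Q.1.parts.erase Q.1.parts.sup).erase Q.1.parts.sup,
      x ≤ 2 * Q.1.parts.sup := by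
    intro x hx
    have : x ≤ Q.1.parts.sup :=
      Multiset.le_sup (Multiset.mem_of_mem_erase (Multiset.mem_of_mem_erase hx))
    omega
  have hsup : (2 * Q.1.parts.sup ::ₘ
      (Q.1.parts.erase Q.1.parts.sup).erase Q.1.parts.sup).sup = 2 * Q.1.parts.sup :=
    my_sup_cons_eq (Multiset.sup_le.mpr hsub)
  have hbwd : (bwd n hn Q).1.parts =
      2 * Q.1.parts.sup ::ₘ (Q.1.parts.erase Q.1.parts.sup).erase Q.1.parts.sup := rfl
  show (bwd n hn Q).1.parts.sup / 2 ::ₘ (bwd n hn Q).1.parts.sup / 2 ::ₘ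
      (bwd n hn Q).1.parts.erase (bwd n hn Q).1.parts.sup = Q.1.parts
  rw [hbwd, hsup]
  have h2 : 2 * Q.1.parts.sup / 2 = Q.1.parts.sup := by omega
  rw [h2, Multiset.erase_cons_head, Multiset.cons_erase hmem2, Multiset.cons_erase hmem]

/-- The number of partitions of `n` whose largest part `M` is even, whose other
parts are all `≤ M/2`, and in which `M/2` appears an even number of times,
equals the number of partitions of `n` whose largest part appears an even
number of times. -/
theorem stmt_1 (n : ℕ) (hn : 1 ≤ n) :
    Nat.card {p : n.Partition //
        Even p.parts.sup ∧
        (∀ x ∈ p.parts.erase p.parts.sup, x ≤ p.parts.sup / 2) ∧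
        Even (p.parts.count (p.parts.sup / 2))} =
    Nat.card {p : n.Partition // Even (p.parts.count p.parts.sup)} := by
  exact Nat.card_congr ⟨fwd n hn, bwd n hn, bwd_fwd n hn, fwd_bwd n hn⟩
end

section
/- For n ≥ 1, the signed count of overpartitions π of n, weighted by (-1)^{ℓ_{N<O}(π)}, equals twice the number of partitions of n with an even number of parts, where ℓ_{N<O}(π) is the number of non-overlined parts of π of size strictly less than the largest overlined part (counting all non-overlined parts if there is no overlined part, i.e. treating the largest overlined size as +∞). -/
open scoped Classical

/-- An overpartition of `n`: a finite set of overlined part sizes (the first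
occurrence of a size may be overlined, so overlined parts are distinct)
together with a multiset of non-overlined parts, all parts positive,
with total sum `n`. -/
structure Overpartition (n : ℕ) where
  overl : Finset ℕ
  plain : Multiset ℕ
  over_pos : ∀ x ∈ overl, 0 < x
  plain_pos : ∀ x ∈ plain, 0 < x
  sum_eq : (∑ x ∈ overl, x) + plain.sum = n
/-- Number of non-overlined parts of size strictly less than the largest
overlined part; all non-overlined parts count if there is no overlined part. -/
noncomputable def lNltO {n : ℕ} (π : Overpartition n) : ℕ :=
  if π.overl = ∅ then Multiset.card π.plain
  else Multiset.card (π.plain.filter (fun x => ∃ y ∈ π.overl, x < y))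

/-!
Let `m` be the largest overlined part (`m = 0` if there is none) and call the parts, overlined or
not, that are smaller than `m` small. Toggling the overline on the smallest small part keeps `m`
and the multiset of small parts, and changes `lNltO` by one: it is a sign-reversing involution on
the overpartitions having a small part. Forgetting overlines maps each of the two remaining
families bijectively onto the partitions of `n`: those without overlined parts, with sign
`(-1) ^ (number of parts)`, and those whose only overlined part `m` is also their smallest part,
with sign `+1`. Summing, every partition with an even number of parts counts twice and every other
partition cancels.
-/

theorem card_even_sub_card_odd {α : Type*} [Fintype α] (g : α → ℕ) :
    (Nat.card {a // Even (g a)} : ℤ) - Nat.card {a // Odd (g a)} = ∑ a, (-1 : ℤ) ^ g a := by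
  simp only [neg_one_pow_eq_ite, Finset.sum_ite, Finset.sum_const, smul_neg, nsmul_eq_mul,
    mul_one, Nat.not_even_iff_odd, Nat.card_eq_fintype_card, Fintype.card_subtype]
  ring

theorem sum_neg_one_pow_add_one {α : Type*} [Fintype α] (g : α → ℕ) :
    ∑ a, ((-1 : ℤ) ^ g a + 1) = 2 * (Nat.card {a // Even (g a)} : ℤ) := by
  have h : ∀ k : ℕ, (-1 : ℤ) ^ k + 1 = 2 * if Even k then 1 else 0 := fun k => by
    rw [neg_one_pow_eq_ite]; split_ifs <;> norm_num
  simp only [h, ← Finset.mul_sum, Finset.sum_boole, Nat.card_eq_fintype_card,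
    Fintype.card_subtype]

namespace Overpartition

variable {n : ℕ} {π σ : Overpartition n} {j : ℕ}

def toPartition (π : Overpartition n) : n.Partition where
  parts := π.overl.val + π.plain
  parts_pos hx := (Multiset.mem_add.1 hx).elim (π.over_pos _) (π.plain_pos _)
  parts_sum := by rw [Multiset.sum_add, Finset.sum_val]; exact π.sum_eq

def ofSplit (p : n.Partition) (O : Finset ℕ) (P : Multiset ℕ) (h : O.val + P = p.parts) :
    Overpartition n where
  overl := O
  plain := P
  over_pos _ hx := p.parts_pos (h ▸ Multiset.mem_add.2 (Or.inl hx))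
  plain_pos _ hx := p.parts_pos (h ▸ Multiset.mem_add.2 (Or.inr hx))
  sum_eq := by rw [← p.parts_sum, ← h, Multiset.sum_add, Finset.sum_val]; rfl

@[simp]
theorem toPartition_ofSplit (p : n.Partition) (O : Finset ℕ) (P : Multiset ℕ)
    (h : O.val + P = p.parts) : (ofSplit p O P h).toPartition = p :=
  Nat.Partition.ext h

theorem eq_of_toPartition_eq (hU : π.toPartition = σ.toPartition)
    (hO : π.overl = σ.overl) : π = σ := by
  have hP : π.plain = σ.plain := by
    have := congrArg Nat.Partition.parts hU
    simp only [toPartition, hO] at this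
    exact add_left_cancel this
  cases π; cases σ; cases hO; cases hP; rfl

theorem overl_subset_range (π : Overpartition n) : π.overl ⊆ Finset.range (n + 1) := fun _ hx =>
  Finset.mem_range_succ_iff.2 <| π.toPartition.le_of_mem_parts (Multiset.mem_add.2 (Or.inl hx))

instance : Finite (Overpartition n) :=
  Finite.of_injective
    (fun π => (π.toPartition, (⟨π.overl, Finset.mem_powerset.2 π.overl_subset_range⟩ :
      (Finset.range (n + 1)).powerset)))
    fun _ _ h => eq_of_toPartition_eq (congrArg Prod.fst h) (congrArg (Subtype.val ∘ Prod.snd) h)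

noncomputable instance : Fintype (Overpartition n) := Fintype.ofFinite _

def maxOverl (π : Overpartition n) : ℕ := π.overl.sup id

theorem le_maxOverl {x : ℕ} (hx : x ∈ π.overl) : x ≤ π.maxOverl :=
  Finset.le_sup (f := id) hx

theorem maxOverl_mem (h : π.overl.Nonempty) : π.maxOverl ∈ π.overl := by
  obtain ⟨_, hm, hsup⟩ := Finset.exists_mem_eq_sup _ h id
  rwa [maxOverl, hsup]

theorem overl_nonempty_of_lt_maxOverl (hj : j < π.maxOverl) :
    π.overl.Nonempty := by
  rw [Finset.nonempty_iff_ne_empty]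
  rintro h
  simp [maxOverl, h] at hj

theorem lNltO_of_overl_eq_empty (h : π.overl = ∅) :
    lNltO π = Multiset.card π.plain :=
  if_pos h

theorem lNltO_of_overl_nonempty (h : π.overl.Nonempty) :
    lNltO π = Multiset.card (π.plain.filter (· < π.maxOverl)) := by
  rw [lNltO, if_neg h.ne_empty]
  congr 1
  refine Multiset.filter_congr fun x _ => ⟨?_, fun hx => ⟨_, maxOverl_mem h, hx⟩⟩
  rintro ⟨y, hy, hxy⟩
  exact hxy.trans_le (le_maxOverl hy)

def smallParts (π : Overpartition n) : Multiset ℕ :=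
  π.toPartition.parts.filter (· < π.maxOverl)

theorem smallParts_eq_zero_of_overl_eq_empty (h : π.overl = ∅) :
    π.smallParts = 0 := by
  simp [smallParts, maxOverl, h]

theorem lNltO_eq_zero_of_smallParts_eq_zero (hO : π.overl.Nonempty)
    (h : π.smallParts = 0) : lNltO π = 0 := by
  rw [lNltO_of_overl_nonempty hO, Multiset.card_eq_zero, ← Multiset.le_zero, ← h]
  exact Multiset.filter_le_filter _ (Multiset.le_add_left _ _)

def toggle (π : Overpartition n) (j : ℕ) : Overpartition n :=
  if hO : j ∈ π.overl then
    ofSplit π.toPartition (π.overl.erase j) (j ::ₘ π.plain) <| by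
      rw [Finset.erase_val, Multiset.add_cons, ← Multiset.cons_add, Multiset.cons_erase hO]; rfl
  else if hP : j ∈ π.plain then
    ofSplit π.toPartition (insert j π.overl) (π.plain.erase j) <| by
      rw [Finset.insert_val_of_notMem hO, Multiset.cons_add, ← Multiset.add_cons,
        Multiset.cons_erase hP]; rfl
  else π

theorem overl_toggle_of_mem_overl (hO : j ∈ π.overl) : (π.toggle j).overl = π.overl.erase j := by
  rw [toggle, dif_pos hO]; rfl

theorem plain_toggle_of_mem_overl (hO : j ∈ π.overl) : (π.toggle j).plain = j ::ₘ π.plain := by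
  rw [toggle, dif_pos hO]; rfl

theorem overl_toggle_of_mem_plain (hO : j ∉ π.overl) (hP : j ∈ π.plain) :
    (π.toggle j).overl = insert j π.overl := by
  rw [toggle, dif_neg hO, dif_pos hP]; rfl

@[simp]
theorem toPartition_toggle : (π.toggle j).toPartition = π.toPartition := by
  unfold toggle; split_ifs <;> simp

theorem toggle_toggle (hj : j ∈ π.toPartition.parts) : (π.toggle j).toggle j = π := by
  refine eq_of_toPartition_eq (by simp) ?_
  by_cases hO : j ∈ π.overl
  · have hO' : j ∉ (π.toggle j).overl := by simp [overl_toggle_of_mem_overl hO]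
    have hP' : j ∈ (π.toggle j).plain := by simp [plain_toggle_of_mem_overl hO]
    rw [overl_toggle_of_mem_plain hO' hP', overl_toggle_of_mem_overl hO, Finset.insert_erase hO]
  · have hP : j ∈ π.plain := (Multiset.mem_add.1 hj).resolve_left hO
    have hO' : j ∈ (π.toggle j).overl := by simp [overl_toggle_of_mem_plain hO hP]
    rw [overl_toggle_of_mem_overl hO', overl_toggle_of_mem_plain hO hP, Finset.erase_insert hO]

theorem maxOverl_toggle (hj : j < π.maxOverl) : (π.toggle j).maxOverl = π.maxOverl := by
  by_cases hO : j ∈ π.overl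
  · have hm : π.maxOverl ∈ π.overl.erase j :=
      Finset.mem_erase.2 ⟨hj.ne', maxOverl_mem ⟨j, hO⟩⟩
    rw [maxOverl, overl_toggle_of_mem_overl hO]
    exact le_antisymm (Finset.sup_mono (Finset.erase_subset _ _)) (Finset.le_sup (f := id) hm)
  by_cases hP : j ∈ π.plain
  · rw [maxOverl, overl_toggle_of_mem_plain hO hP, Finset.sup_insert]
    exact max_eq_right hj.le
  · simp [toggle, hO, hP]

theorem smallParts_toggle (hj : j < π.maxOverl) : (π.toggle j).smallParts = π.smallParts := by
  rw [smallParts, smallParts, toPartition_toggle, maxOverl_toggle hj]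

theorem lNltO_toggle_of_mem_overl (hO : j ∈ π.overl) (hj : j < π.maxOverl) :
    lNltO (π.toggle j) = lNltO π + 1 := by
  rw [lNltO_of_overl_nonempty ⟨j, hO⟩,
    lNltO_of_overl_nonempty (overl_nonempty_of_lt_maxOverl ((maxOverl_toggle hj).symm ▸ hj)),
    plain_toggle_of_mem_overl hO, maxOverl_toggle hj,
    Multiset.filter_cons_of_pos (p := (· < π.maxOverl)) _ hj, Multiset.card_cons]

-- For a plain part `j`, apply the previous lemma to `π.toggle j`, in which `j` is overlined.
theorem neg_one_pow_lNltO_toggle (hj : j ∈ π.smallParts) :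
    (-1 : ℤ) ^ lNltO (π.toggle j) = -(-1) ^ lNltO π := by
  obtain ⟨hU, hlt⟩ := Multiset.mem_filter.1 hj
  by_cases hO : j ∈ π.overl
  · rw [lNltO_toggle_of_mem_overl hO hlt, pow_succ, mul_neg_one]
  · have hP : j ∈ π.plain := (Multiset.mem_add.1 hU).resolve_left hO
    have hO' : j ∈ (π.toggle j).overl := by simp [overl_toggle_of_mem_plain hO hP]
    have h := lNltO_toggle_of_mem_overl hO' ((maxOverl_toggle hlt).symm ▸ hlt)
    rw [toggle_toggle hU] at h
    rw [h, pow_succ, mul_neg_one, neg_neg]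

noncomputable def toggleMinSmallPart (π : Overpartition n) : Overpartition n :=
  π.toggle (sInf {j | j ∈ π.smallParts})

theorem sInf_mem_smallParts (h : π.smallParts ≠ 0) :
    sInf {j | j ∈ π.smallParts} ∈ π.smallParts :=
  Nat.sInf_mem (Multiset.exists_mem_of_ne_zero h)

theorem smallParts_toggleMinSmallPart (h : π.smallParts ≠ 0) :
    π.toggleMinSmallPart.smallParts = π.smallParts :=
  smallParts_toggle (Multiset.mem_filter.1 (sInf_mem_smallParts h)).2

theorem toggleMinSmallPart_toggleMinSmallPart (h : π.smallParts ≠ 0) :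
    π.toggleMinSmallPart.toggleMinSmallPart = π := by
  rw [toggleMinSmallPart, smallParts_toggleMinSmallPart h]
  exact toggle_toggle (Multiset.mem_filter.1 (sInf_mem_smallParts h)).1

theorem neg_one_pow_lNltO_toggleMinSmallPart (h : π.smallParts ≠ 0) :
    (-1 : ℤ) ^ lNltO π.toggleMinSmallPart = -(-1) ^ lNltO π :=
  neg_one_pow_lNltO_toggle (sInf_mem_smallParts h)

theorem sum_neg_one_pow_lNltO_of_smallParts_ne_zero :
    ∑ π : Overpartition n with π.smallParts ≠ 0, (-1 : ℤ) ^ lNltO π = 0 := by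
  refine Finset.sum_involution (fun π _ => π.toggleMinSmallPart) (fun π hπ => ?_)
    (fun π hπ _ hfix => ?_) (fun π hπ => ?_) (fun π hπ => ?_)
  all_goals replace hπ := (Finset.mem_filter.1 hπ).2
  · rw [neg_one_pow_lNltO_toggleMinSmallPart hπ, add_neg_cancel]
  · have h := neg_one_pow_lNltO_toggleMinSmallPart hπ
    rw [hfix, CharZero.eq_neg_self_iff] at h
    exact Int.neg_one_pow_ne_zero h
  · exact Finset.mem_filter.2 ⟨Finset.mem_univ _, smallParts_toggleMinSmallPart hπ ▸ hπ⟩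
  · exact toggleMinSmallPart_toggleMinSmallPart hπ

theorem bijOn_toPartition_overl_eq_empty :
    Set.BijOn toPartition {π : Overpartition n | π.overl = ∅} Set.univ :=
  ⟨Set.mapsTo_univ _ _, fun _ hπ _ hσ h => eq_of_toPartition_eq h (hπ.trans hσ.symm),
    fun p _ => ⟨ofSplit p ∅ p.parts (by simp), rfl, by simp⟩⟩

theorem maxOverl_mem_parts (h : π.overl.Nonempty) : π.maxOverl ∈ π.toPartition.parts :=
  Multiset.mem_add.2 (Or.inl (maxOverl_mem h))

theorem maxOverl_le_of_smallParts_eq_zero (h : π.smallParts = 0) {x : ℕ}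
    (hx : x ∈ π.toPartition.parts) : π.maxOverl ≤ x :=
  not_lt.1 (Multiset.filter_eq_nil.1 h x hx)

theorem overl_eq_singleton_of_smallParts_eq_zero (hO : π.overl.Nonempty)
    (h : π.smallParts = 0) : π.overl = {π.maxOverl} :=
  Finset.eq_singleton_iff_unique_mem.2 ⟨maxOverl_mem hO, fun _ hx => (le_maxOverl hx).antisymm
    (maxOverl_le_of_smallParts_eq_zero h (Multiset.mem_add.2 (Or.inl hx)))⟩

theorem bijOn_toPartition_smallParts_eq_zero (hn : n ≠ 0) :
    Set.BijOn toPartition {π : Overpartition n | π.overl.Nonempty ∧ π.smallParts = 0}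
      Set.univ := by
  refine ⟨Set.mapsTo_univ _ _, ?_, fun p _ => ?_⟩
  · rintro π ⟨hπO, hπ⟩ σ ⟨hσO, hσ⟩ h
    have hm : π.maxOverl = σ.maxOverl :=
      (maxOverl_le_of_smallParts_eq_zero hπ (h ▸ maxOverl_mem_parts hσO)).antisymm
        (maxOverl_le_of_smallParts_eq_zero hσ (h ▸ maxOverl_mem_parts hπO))
    refine eq_of_toPartition_eq h ?_
    rw [overl_eq_singleton_of_smallParts_eq_zero hπO hπ,
      overl_eq_singleton_of_smallParts_eq_zero hσO hσ, hm]
  · have hp : p.parts ≠ 0 := fun h0 => hn (by simpa [h0] using p.parts_sum.symm)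
    set m := sInf {j | j ∈ p.parts}
    have hm : m ∈ p.parts := Nat.sInf_mem (Multiset.exists_mem_of_ne_zero hp)
    let π := ofSplit p {m} (p.parts.erase m) <| by
      rw [Finset.singleton_val, Multiset.singleton_add, Multiset.cons_erase hm]
    have hmax : π.maxOverl = m := Finset.sup_singleton
    refine ⟨π, ⟨Finset.singleton_nonempty m, ?_⟩, toPartition_ofSplit ..⟩
    rw [smallParts, hmax, toPartition_ofSplit, Multiset.filter_eq_nil]
    exact fun x hx => not_lt.2 (Nat.sInf_le hx)

theorem sum_univ_eq_add_add {M : Type*} [AddCommMonoid M] (f : Overpartition n → M) :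
    ∑ π, f π = ∑ π with π.overl = ∅, f π + ∑ π with π.overl.Nonempty ∧ π.smallParts = 0, f π +
      ∑ π with π.smallParts ≠ 0, f π := by
  rw [add_assoc, ← Finset.sum_filter_add_sum_filter_not _ (fun π => π.overl = ∅)]
  congr 1
  rw [← Finset.sum_filter_add_sum_filter_not _ (fun π => π.smallParts = 0),
    Finset.filter_filter, Finset.filter_filter]
  congr 2 <;> ext π
  · simp [Finset.nonempty_iff_ne_empty]
  · simp only [Finset.mem_filter, Finset.mem_univ, true_and, and_iff_right_iff_imp]
    exact fun h hO => h (smallParts_eq_zero_of_overl_eq_empty hO)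

theorem sum_neg_one_pow_lNltO (hn : n ≠ 0) :
    ∑ π : Overpartition n, (-1 : ℤ) ^ lNltO π =
      ∑ p : n.Partition, ((-1) ^ Multiset.card p.parts + 1) := by
  have hempty := bijOn_toPartition_overl_eq_empty (n := n)
  have hfixed := bijOn_toPartition_smallParts_eq_zero hn
  rw [sum_univ_eq_add_add, sum_neg_one_pow_lNltO_of_smallParts_ne_zero, add_zero,
    Finset.sum_add_distrib]
  congr 1
  · refine Finset.sum_nbij toPartition (fun _ _ => Finset.mem_univ _) (by simpa using hempty.injOn)
      (by simpa using hempty.surjOn) fun π hπ => ?_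
    rw [lNltO_of_overl_eq_empty (Finset.mem_filter.1 hπ).2]
    simp [toPartition, (Finset.mem_filter.1 hπ).2]
  · refine Finset.sum_nbij toPartition (fun _ _ => Finset.mem_univ _) (by simpa using hfixed.injOn)
      (by simpa using hfixed.surjOn) fun π hπ => ?_
    obtain ⟨hO, h⟩ := (Finset.mem_filter.1 hπ).2
    rw [lNltO_eq_zero_of_smallParts_eq_zero hO h, pow_zero]

end Overpartition

theorem stmt_2 (n : ℕ) (hn : 1 ≤ n) :
    (Nat.card {π : Overpartition n // Even (lNltO π)} : ℤ) -
      Nat.card {π : Overpartition n // Odd (lNltO π)} =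
    2 * Nat.card {p : n.Partition // Even (Multiset.card p.parts)} := by
  rw [card_even_sub_card_odd, Overpartition.sum_neg_one_pow_lNltO (Nat.one_le_iff_ne_zero.1 hn),
    sum_neg_one_pow_add_one]
end

section
/- For n ≥ 1, the signed count over all overpartitions π of n, weighted by (-1)^{ℓ_{O<N}(π)} (where ℓ_{O<N}(π) counts overlined parts of size strictly less than the largest non-overlined part, the largest non-overlined size being treated as +∞ when there is no non-overlined part, so that then all overlined parts count), equals 2·H^o(n), twice the number of overpartitions λ of n with at least one non-overlined part, all non-overlined parts equal to a common size s, all overlined parts of size ≥ s, and an odd number of overlined parts. -/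
open scoped Classical

/-- Number of overlined parts of size strictly less than the largest
non-overlined part; all overlined parts count if there is no non-overlined
part (largest non-overlined size treated as +∞). -/
noncomputable def lOltN {n : ℕ} (π : Overpartition n) : ℕ :=
  if π.plain = 0 then π.overl.card
  else (π.overl.filter (fun x => ∃ y ∈ π.plain, x < y)).card

namespace StmtAux

open Finset

variable {n : ℕ}

lemma op_ext {π σ : Overpartition n} (h1 : π.overl = σ.overl) (h2 : π.plain = σ.plain) :
    π = σ := by
  cases π; cases σ; simp_all

lemma sum_map_succ (m : Multiset ℕ) : (m.map (· + 1)).sum = m.sum + Multiset.card m := by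
  induction m using Multiset.induction with
  | empty => simp
  | cons a s ih => simp [ih]; ring

lemma card_le_sum (m : Multiset ℕ) (h : ∀ x ∈ m, 0 < x) : Multiset.card m ≤ m.sum := by
  simpa using Multiset.card_nsmul_le_sum (s := m) (a := 1) h

/-- encoding of a bounded positive multiset as a partition of 2n -/
def pad (n : ℕ) (m : Multiset ℕ) : Multiset ℕ :=
  m.map (· + 1) + Multiset.replicate (2 * n - (m.sum + Multiset.card m)) 1

lemma pad_filter (n : ℕ) (m : Multiset ℕ) (h : ∀ x ∈ m, 0 < x) :
    (pad n m).filter (fun x => 2 ≤ x) = m.map (· + 1) := by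
  rw [pad, Multiset.filter_add, Multiset.filter_eq_self.mpr, Multiset.filter_eq_nil.mpr, add_zero]
  · intro a ha
    rw [Multiset.eq_of_mem_replicate ha]; omega
  · intro a ha
    obtain ⟨b, hb, rfl⟩ := Multiset.mem_map.mp ha
    have := h b hb; omega

lemma pad_inj (n : ℕ) {m p : Multiset ℕ} (hm : ∀ x ∈ m, 0 < x) (hp : ∀ x ∈ p, 0 < x)
    (h : pad n m = pad n p) : m = p := by
  have h2 : m.map (· + 1) = p.map (· + 1) := by
    rw [← pad_filter n m hm, ← pad_filter n p hp, h]
  exact Multiset.map_injective (fun a b hab => by omega) h2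

lemma pad_pos (n : ℕ) (m : Multiset ℕ) : ∀ x ∈ pad n m, 0 < x := by
  intro x hx
  rw [pad, Multiset.mem_add] at hx
  rcases hx with hx | hx
  · obtain ⟨b, _, rfl⟩ := Multiset.mem_map.mp hx; omega
  · rw [Multiset.eq_of_mem_replicate hx]; omega

lemma pad_sum (n : ℕ) (m : Multiset ℕ) (h : ∀ x ∈ m, 0 < x) (hs : m.sum ≤ n) :
    (pad n m).sum = 2 * n := by
  have hc := card_le_sum m h
  rw [pad, Multiset.sum_add, sum_map_succ, Multiset.sum_replicate, smul_eq_mul, mul_one]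
  omega

lemma over_sum_le (π : Overpartition n) : (π.overl.val).sum ≤ n := by
  have := π.sum_eq
  have h2 : ∑ x ∈ π.overl, x = π.overl.val.sum := by
    rw [Finset.sum_eq_multiset_sum, Multiset.map_id']
  omega

lemma plain_sum_le (π : Overpartition n) : π.plain.sum ≤ n := by
  have := π.sum_eq; omega

instance : Finite (Overpartition n) := by
  apply Finite.of_injective (β := Nat.Partition (2 * n) × Nat.Partition (2 * n))
    (fun π => (⟨pad n π.overl.val, fun {x} hx => pad_pos n _ x hx, pad_sum n _ (fun x hx => π.over_pos x hx) (over_sum_le π)⟩,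
               ⟨pad n π.plain, fun {x} hx => pad_pos n _ x hx, pad_sum n _ π.plain_pos (plain_sum_le π)⟩))
  intro π σ h
  have h1 := congrArg (fun x : Nat.Partition (2*n) × Nat.Partition (2*n) => x.1.parts) h
  have h2 := congrArg (fun x : Nat.Partition (2*n) × Nat.Partition (2*n) => x.2.parts) h
  simp only at h1 h2
  apply op_ext
  · exact Finset.val_injective (pad_inj n (fun x hx => π.over_pos x hx) (fun x hx => σ.over_pos x hx) h1)
  · exact pad_inj n π.plain_pos σ.plain_pos h2


noncomputable def Nmax (π : Overpartition n) : ℕ :=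
  if h : π.plain.toFinset.Nonempty then π.plain.toFinset.max' h else 0

lemma Nmax_mem {π : Overpartition n} (h : π.plain ≠ 0) : Nmax π ∈ π.plain := by
  have ht : π.plain.toFinset.Nonempty := by
    obtain ⟨a, ha⟩ := Multiset.exists_mem_of_ne_zero h
    exact ⟨a, Multiset.mem_toFinset.mpr ha⟩
  rw [Nmax, dif_pos ht]
  exact Multiset.mem_toFinset.mp (Finset.max'_mem _ ht)

lemma le_Nmax {π : Overpartition n} {y : ℕ} (hy : y ∈ π.plain) : y ≤ Nmax π := by
  have ht : π.plain.toFinset.Nonempty := ⟨y, Multiset.mem_toFinset.mpr hy⟩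
  rw [Nmax, dif_pos ht]
  exact Finset.le_max' _ _ (Multiset.mem_toFinset.mpr hy)

lemma Nmax_eq {π : Overpartition n} {m : ℕ} (hm : m ∈ π.plain)
    (hub : ∀ y ∈ π.plain, y ≤ m) : Nmax π = m := by
  have h0 : π.plain ≠ 0 := fun h => by simp [h] at hm
  exact le_antisymm (hub _ (Nmax_mem h0)) (le_Nmax hm)

lemma plain_ne_zero_of_lt {π : Overpartition n} {k : ℕ} (h : k < Nmax π) : π.plain ≠ 0 := by
  intro h0
  rw [Nmax, dif_neg (by simp [h0])] at h
  omega

noncomputable def lowSet (π : Overpartition n) : Finset ℕ :=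
  (π.overl ∪ π.plain.toFinset).filter (· < Nmax π)

def inS (π : Overpartition n) : Prop :=
  (∀ x ∈ π.plain, ∀ y ∈ π.plain, x = y) ∧ (∀ x ∈ π.overl, ∀ y ∈ π.plain, y ≤ x)

lemma lowSet_nonempty_of_not_inS {π : Overpartition n} (h : ¬ inS π) :
    (lowSet π).Nonempty := by
  rw [inS, not_and_or] at h
  rcases h with h | h
  · push_neg at h
    obtain ⟨x, hx, y, hy, hxy⟩ := h
    rcases lt_or_gt_of_ne hxy with hlt | hlt
    · exact ⟨x, Finset.mem_filter.mpr ⟨Finset.mem_union_right _ (Multiset.mem_toFinset.mpr hx),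
        lt_of_lt_of_le hlt (le_Nmax hy)⟩⟩
    · exact ⟨y, Finset.mem_filter.mpr ⟨Finset.mem_union_right _ (Multiset.mem_toFinset.mpr hy),
        lt_of_lt_of_le hlt (le_Nmax hx)⟩⟩
  · push_neg at h
    obtain ⟨x, hx, y, hy, hxy⟩ := h
    exact ⟨x, Finset.mem_filter.mpr ⟨Finset.mem_union_left _ hx,
      lt_of_lt_of_le hxy (le_Nmax hy)⟩⟩

lemma not_inS_of_lowSet_nonempty {π : Overpartition n} (h : (lowSet π).Nonempty) :
    ¬ inS π := by
  obtain ⟨z, hz⟩ := h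
  rw [lowSet, Finset.mem_filter, Finset.mem_union] at hz
  have hp : π.plain ≠ 0 := plain_ne_zero_of_lt hz.2
  rintro ⟨hall, hge⟩
  rcases hz.1 with hz1 | hz1
  · exact absurd (hge z hz1 _ (Nmax_mem hp)) (by omega)
  · exact absurd (hall z (Multiset.mem_toFinset.mp hz1) _ (Nmax_mem hp)) (by omega)

noncomputable def lOltN' (π : Overpartition n) : ℕ :=
  if π.plain = 0 then π.overl.card
  else (π.overl.filter (fun x => ∃ y ∈ π.plain, x < y)).card

lemma lOltN'_eq {π : Overpartition n} (h : π.plain ≠ 0) :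
    lOltN' π = (π.overl.filter (· < Nmax π)).card := by
  rw [lOltN', if_neg h]
  congr 1
  apply Finset.filter_congr
  intro x _
  constructor
  · rintro ⟨y, hy, hxy⟩; exact lt_of_lt_of_le hxy (le_Nmax hy)
  · intro hx; exact ⟨Nmax π, Nmax_mem h, hx⟩

def moveToPlain (π : Overpartition n) (k : ℕ) (hk : k ∈ π.overl) : Overpartition n where
  overl := π.overl.erase k
  plain := k ::ₘ π.plain
  over_pos := fun x hx => π.over_pos x (Finset.mem_of_mem_erase hx)
  plain_pos := fun x hx => by
    rcases Multiset.mem_cons.mp hx with rfl | h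
    · exact π.over_pos _ hk
    · exact π.plain_pos _ h
  sum_eq := by
    have h1 := Finset.sum_erase_add π.overl id hk
    have h2 := π.sum_eq
    simp only [id_eq] at h1
    rw [Multiset.sum_cons]
    omega

def moveToOver (π : Overpartition n) (k : ℕ) (hk1 : k ∉ π.overl) (hk2 : k ∈ π.plain) :
    Overpartition n where
  overl := insert k π.overl
  plain := π.plain.erase k
  over_pos := fun x hx => by
    rcases Finset.mem_insert.mp hx with rfl | h
    · exact π.plain_pos _ hk2
    · exact π.over_pos _ h
  plain_pos := fun x hx => π.plain_pos x (Multiset.mem_of_mem_erase hx)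
  sum_eq := by
    have h1 : (k ::ₘ π.plain.erase k).sum = π.plain.sum := by rw [Multiset.cons_erase hk2]
    rw [Multiset.sum_cons] at h1
    rw [Finset.sum_insert hk1]
    have h2 := π.sum_eq
    omega


section Phi

variable {π : Overpartition n} {k : ℕ}

lemma Nmax_moveToPlain (hklt : k < Nmax π) (hk : k ∈ π.overl) :
    Nmax (moveToPlain π k hk) = Nmax π := by
  have hp : π.plain ≠ 0 := plain_ne_zero_of_lt hklt
  apply Nmax_eq
  · exact Multiset.mem_cons_of_mem (Nmax_mem hp)
  · intro y hy
    rcases Multiset.mem_cons.mp hy with rfl | h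
    · omega
    · exact le_Nmax h

lemma Nmax_moveToOver (hklt : k < Nmax π) (hk1 : k ∉ π.overl) (hk2 : k ∈ π.plain) :
    Nmax (moveToOver π k hk1 hk2) = Nmax π := by
  have hp : π.plain ≠ 0 := plain_ne_zero_of_lt hklt
  apply Nmax_eq
  · exact (Multiset.mem_erase_of_ne (by omega)).mpr (Nmax_mem hp)
  · intro y hy
    exact le_Nmax (Multiset.mem_of_mem_erase hy)

lemma lOltN'_moveToPlain (hklt : k < Nmax π) (hk : k ∈ π.overl) :
    lOltN' π = lOltN' (moveToPlain π k hk) + 1 := by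
  have hp : π.plain ≠ 0 := plain_ne_zero_of_lt hklt
  rw [lOltN'_eq hp, lOltN'_eq (by simp [moveToPlain] : (moveToPlain π k hk).plain ≠ 0),
    Nmax_moveToPlain hklt hk]
  show _ = ((π.overl.erase k).filter (· < Nmax π)).card + 1
  rw [Finset.filter_erase]
  have hmem : k ∈ π.overl.filter (· < Nmax π) := Finset.mem_filter.mpr ⟨hk, hklt⟩
  rw [Finset.card_erase_of_mem hmem]
  have : 0 < (π.overl.filter (· < Nmax π)).card := Finset.card_pos.mpr ⟨k, hmem⟩
  omega

lemma lOltN'_moveToOver (hklt : k < Nmax π) (hk1 : k ∉ π.overl) (hk2 : k ∈ π.plain) :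
    lOltN' (moveToOver π k hk1 hk2) = lOltN' π + 1 := by
  have hp : π.plain ≠ 0 := plain_ne_zero_of_lt hklt
  have hp' : (moveToOver π k hk1 hk2).plain ≠ 0 := by
    intro h0
    have := (Multiset.mem_erase_of_ne (show Nmax π ≠ k by omega)).mpr (Nmax_mem hp)
    rw [show (moveToOver π k hk1 hk2).plain = π.plain.erase k from rfl] at h0
    simp [h0] at this
  rw [lOltN'_eq hp, lOltN'_eq hp', Nmax_moveToOver hklt hk1 hk2]
  show ((insert k π.overl).filter (· < Nmax π)).card = _
  rw [Finset.filter_insert, if_pos hklt,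
    Finset.card_insert_of_notMem (fun hmem => hk1 (Finset.mem_filter.mp hmem).1)]

lemma lowSet_moveToPlain (hklt : k < Nmax π) (hk : k ∈ π.overl) :
    lowSet (moveToPlain π k hk) = lowSet π := by
  rw [lowSet, lowSet, Nmax_moveToPlain hklt hk]
  congr 1
  ext x
  show x ∈ π.overl.erase k ∪ (k ::ₘ π.plain).toFinset ↔ _
  simp only [Finset.mem_union, Finset.mem_erase, Multiset.toFinset_cons, Finset.mem_insert,
    Multiset.mem_toFinset]
  by_cases hx : x = k
  · subst hx; simp [hk]
  · tauto

lemma lowSet_moveToOver (hklt : k < Nmax π) (hk1 : k ∉ π.overl) (hk2 : k ∈ π.plain) :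
    lowSet (moveToOver π k hk1 hk2) = lowSet π := by
  rw [lowSet, lowSet, Nmax_moveToOver hklt hk1 hk2]
  congr 1
  ext x
  show x ∈ insert k π.overl ∪ (π.plain.erase k).toFinset ↔ _
  simp only [Finset.mem_union, Finset.mem_insert, Multiset.mem_toFinset]
  constructor
  · rintro ((rfl | h) | h)
    · exact Or.inr hk2
    · exact Or.inl h
    · exact Or.inr (Multiset.mem_of_mem_erase h)
  · rintro (h | h)
    · exact Or.inl (Or.inr h)
    · by_cases hx : x = k
      · exact Or.inl (Or.inl hx)
      · exact Or.inr ((Multiset.mem_erase_of_ne hx).mpr h)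

noncomputable def phi (π : Overpartition n) : Overpartition n :=
  if h : (lowSet π).Nonempty then
    if hk : (lowSet π).min' h ∈ π.overl then moveToPlain π _ hk
    else moveToOver π _ hk (by
      have hm := Finset.min'_mem _ h
      simp only [lowSet, Finset.mem_filter, Finset.mem_union] at hm
      rcases hm.1 with h' | h'
      · exact absurd h' hk
      · exact Multiset.mem_toFinset.mp h')
  else π

lemma min'_hcongr {s t : Finset ℕ} (h : s = t) (hs : s.Nonempty) :
    s.min' hs = t.min' (h ▸ hs) := by subst h; rfl

lemma min'_lowSet_lt (h : (lowSet π).Nonempty) : (lowSet π).min' h < Nmax π := by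
  have := Finset.min'_mem _ h
  simp only [lowSet, Finset.mem_filter] at this
  exact this.2

lemma phi_phi (h : (lowSet π).Nonempty) : phi (phi π) = π := by
  set k := (lowSet π).min' h with hkdef
  have hklt : k < Nmax π := min'_lowSet_lt h
  by_cases hk : k ∈ π.overl
  · have hphi : phi π = moveToPlain π k hk := by rw [phi, dif_pos h, dif_pos hk]
    rw [hphi]
    set π' := moveToPlain π k hk with hπ'
    have hls : lowSet π' = lowSet π := lowSet_moveToPlain hklt hk
    have h' : (lowSet π').Nonempty := by rw [hls]; exact h
    have hmin : (lowSet π').min' h' = k := by rw [min'_hcongr hls h']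
    rw [phi, dif_pos h']
    have hknot : (lowSet π').min' h' ∉ π'.overl := by
      rw [hmin]; exact Finset.notMem_erase k π.overl
    rw [dif_neg hknot]
    apply op_ext
    · show insert ((lowSet π').min' h') π'.overl = π.overl
      rw [hmin]
      exact Finset.insert_erase hk
    · show (π'.plain).erase ((lowSet π').min' h') = π.plain
      rw [hmin]
      exact Multiset.erase_cons_head k π.plain
  · have hk2 : k ∈ π.plain := by
      have hm := Finset.min'_mem _ h
      simp only [lowSet, Finset.mem_filter, Finset.mem_union] at hm
      rcases hm.1 with h' | h'
      · exact absurd h' hk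
      · exact Multiset.mem_toFinset.mp h'
    have hphi : phi π = moveToOver π k hk hk2 := by rw [phi, dif_pos h, dif_neg hk]
    rw [hphi]
    set π' := moveToOver π k hk hk2 with hπ'
    have hls : lowSet π' = lowSet π := lowSet_moveToOver hklt hk hk2
    have h' : (lowSet π').Nonempty := by rw [hls]; exact h
    have hmin : (lowSet π').min' h' = k := by rw [min'_hcongr hls h']
    rw [phi, dif_pos h']
    have hkmem : (lowSet π').min' h' ∈ π'.overl := by
      rw [hmin]; exact Finset.mem_insert_self k π.overl
    rw [dif_pos hkmem]
    apply op_ext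
    · show (π'.overl).erase ((lowSet π').min' h') = π.overl
      rw [hmin]
      exact Finset.erase_insert hk
    · show ((lowSet π').min' h') ::ₘ π'.plain = π.plain
      rw [hmin]
      exact Multiset.cons_erase hk2

lemma phi_not_inS (h : ¬ inS π) : ¬ inS (phi π) := by
  have h1 : (lowSet π).Nonempty := lowSet_nonempty_of_not_inS h
  apply not_inS_of_lowSet_nonempty
  rw [phi, dif_pos h1]
  have hklt : (lowSet π).min' h1 < Nmax π := min'_lowSet_lt h1
  by_cases hk : (lowSet π).min' h1 ∈ π.overl
  · rw [dif_pos hk, lowSet_moveToPlain hklt hk]; exact h1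
  · rw [dif_neg hk, lowSet_moveToOver hklt hk _]; exact h1

lemma phi_sign (h : ¬ inS π) :
    (-1 : ℤ) ^ lOltN' π + (-1 : ℤ) ^ lOltN' (phi π) = 0 := by
  have h1 : (lowSet π).Nonempty := lowSet_nonempty_of_not_inS h
  rw [phi, dif_pos h1]
  have hklt : (lowSet π).min' h1 < Nmax π := min'_lowSet_lt h1
  by_cases hk : (lowSet π).min' h1 ∈ π.overl
  · rw [dif_pos hk, lOltN'_moveToPlain hklt hk, pow_succ]; ring
  · rw [dif_neg hk, lOltN'_moveToOver hklt hk _, pow_succ]; ring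

end Phi


section Psi

variable {π : Overpartition n}

noncomputable def psi (π : Overpartition n) : Overpartition n :=
  if hp : π.plain = 0 then
    if ho : π.overl.Nonempty then moveToPlain π (π.overl.min' ho) (Finset.min'_mem _ ho)
    else π
  else
    if hs : Nmax π ∈ π.overl then moveToPlain π (Nmax π) hs
    else moveToOver π (Nmax π) hs (Nmax_mem hp)

lemma plain_eq_Nmax (hS : inS π) (hp : π.plain ≠ 0) : ∀ y ∈ π.plain, y = Nmax π :=
  fun y hy => hS.1 y hy _ (Nmax_mem hp)

lemma psi_psi (hS : inS π) (honempty : π.plain = 0 → π.overl.Nonempty) :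
    psi (psi π) = π := by
  by_cases hp : π.plain = 0
  · have ho : π.overl.Nonempty := honempty hp
    set s := π.overl.min' ho with hsdef
    have hpsi : psi π = moveToPlain π s (Finset.min'_mem _ ho) := by
      rw [psi, dif_pos hp, dif_pos ho]
    rw [hpsi]
    set π' := moveToPlain π s (Finset.min'_mem _ ho) with hπ'
    have hp' : π'.plain ≠ 0 := Multiset.cons_ne_zero
    have hplain0 : π'.plain = s ::ₘ 0 := by show s ::ₘ π.plain = _; rw [hp]
    have hN' : Nmax π' = s := by
      apply Nmax_eq
      · exact Multiset.mem_cons_self s _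
      · intro y hy
        rw [hplain0] at hy
        rcases Multiset.mem_cons.mp hy with rfl | h
        · exact le_refl _
        · simp at h
    have hnot : Nmax π' ∉ π'.overl := by
      rw [hN']; exact Finset.notMem_erase s π.overl
    rw [psi, dif_neg hp', dif_neg hnot]
    apply op_ext
    · show insert (Nmax π') (π.overl.erase s) = π.overl
      rw [hN']
      exact Finset.insert_erase (Finset.min'_mem _ ho)
    · show (s ::ₘ π.plain).erase (Nmax π') = π.plain
      rw [hN']
      exact Multiset.erase_cons_head s π.plain
  · by_cases hs : Nmax π ∈ π.overl
    · have hpsi : psi π = moveToPlain π (Nmax π) hs := by rw [psi, dif_neg hp, dif_pos hs]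
      rw [hpsi]
      set π' := moveToPlain π (Nmax π) hs with hπ'
      have hp' : π'.plain ≠ 0 := Multiset.cons_ne_zero
      have hN' : Nmax π' = Nmax π := by
        apply Nmax_eq
        · exact Multiset.mem_cons_self _ _
        · intro y hy
          rcases Multiset.mem_cons.mp hy with rfl | h
          · exact le_refl _
          · exact le_Nmax h
      have hnot : Nmax π' ∉ π'.overl := by
        rw [hN']; exact Finset.notMem_erase _ _
      rw [psi, dif_neg hp', dif_neg hnot]
      apply op_ext
      · show insert (Nmax π') (π.overl.erase (Nmax π)) = π.overl
        rw [hN']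
        exact Finset.insert_erase hs
      · show (Nmax π ::ₘ π.plain).erase (Nmax π') = π.plain
        rw [hN']
        exact Multiset.erase_cons_head _ _
    · have hpsi : psi π = moveToOver π (Nmax π) hs (Nmax_mem hp) := by
        rw [psi, dif_neg hp, dif_neg hs]
      rw [hpsi]
      set π' := moveToOver π (Nmax π) hs (Nmax_mem hp) with hπ'
      by_cases hpe : π.plain.erase (Nmax π) = 0
      · have hp' : π'.plain = 0 := hpe
        have ho' : π'.overl.Nonempty := ⟨Nmax π, Finset.mem_insert_self _ _⟩
        have hmin : π'.overl.min' ho' = Nmax π := by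
          apply le_antisymm
          · exact Finset.min'_le _ _ (Finset.mem_insert_self _ _)
          · apply Finset.le_min'
            intro x hx
            rcases Finset.mem_insert.mp hx with rfl | h
            · exact le_refl _
            · exact hS.2 x h _ (Nmax_mem hp)
        rw [psi, dif_pos hp', dif_pos ho']
        apply op_ext
        · show ((insert (Nmax π) π.overl).erase (π'.overl.min' ho')) = π.overl
          rw [hmin]
          exact Finset.erase_insert hs
        · show (π'.overl.min' ho') ::ₘ (π.plain.erase (Nmax π)) = π.plain
          rw [hmin, hpe, ← Multiset.cons_erase (Nmax_mem hp), hpe]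
      · have hNmem : Nmax π ∈ π.plain.erase (Nmax π) := by
          obtain ⟨y, hy⟩ := Multiset.exists_mem_of_ne_zero hpe
          have := plain_eq_Nmax hS hp y (Multiset.mem_of_mem_erase hy)
          rwa [this] at hy
        have hp' : π'.plain ≠ 0 := fun h0 => by
          simp [show π.plain.erase (Nmax π) = 0 from h0] at hNmem
        have hN' : Nmax π' = Nmax π := by
          apply Nmax_eq
          · exact hNmem
          · intro y hy
            exact le_Nmax (Multiset.mem_of_mem_erase hy)
        have hs' : Nmax π' ∈ π'.overl := by
          rw [hN']; exact Finset.mem_insert_self _ _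
        rw [psi, dif_neg hp', dif_pos hs']
        apply op_ext
        · show (insert (Nmax π) π.overl).erase (Nmax π') = π.overl
          rw [hN']
          exact Finset.erase_insert hs
        · show (Nmax π') ::ₘ (π.plain.erase (Nmax π)) = π.plain
          rw [hN']
          exact Multiset.cons_erase (Nmax_mem hp)

lemma psi_inS (hS : inS π) : inS (psi π) := by
  by_cases hp : π.plain = 0
  · by_cases ho : π.overl.Nonempty
    · have hpsi : psi π = moveToPlain π (π.overl.min' ho) (Finset.min'_mem _ ho) := by
        rw [psi, dif_pos hp, dif_pos ho]
      rw [hpsi]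
      constructor
      · intro x hx y hy
        replace hx : x ∈ (π.overl.min' ho) ::ₘ π.plain := hx
        replace hy : y ∈ (π.overl.min' ho) ::ₘ π.plain := hy
        rw [hp] at hx hy
        rcases Multiset.mem_cons.mp hx with rfl | h
        · rcases Multiset.mem_cons.mp hy with rfl | h'
          · rfl
          · simp at h'
        · simp at h
      · intro x hx y hy
        replace hx : x ∈ π.overl.erase (π.overl.min' ho) := hx
        replace hy : y ∈ (π.overl.min' ho) ::ₘ π.plain := hy
        rw [hp] at hy
        rcases Multiset.mem_cons.mp hy with rfl | h'
        · exact Finset.min'_le _ _ (Finset.mem_of_mem_erase hx)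
        · simp at h'
    · rw [psi, dif_pos hp, dif_neg ho]; exact hS
  · by_cases hs : Nmax π ∈ π.overl
    · have hpsi : psi π = moveToPlain π (Nmax π) hs := by rw [psi, dif_neg hp, dif_pos hs]
      rw [hpsi]
      constructor
      · intro x hx y hy
        replace hx : x ∈ (Nmax π) ::ₘ π.plain := hx
        replace hy : y ∈ (Nmax π) ::ₘ π.plain := hy
        have hx' : x = Nmax π := by
          rcases Multiset.mem_cons.mp hx with rfl | h
          · rfl
          · exact plain_eq_Nmax hS hp x h
        have hy' : y = Nmax π := by
          rcases Multiset.mem_cons.mp hy with rfl | h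
          · rfl
          · exact plain_eq_Nmax hS hp y h
        rw [hx', hy']
      · intro x hx y hy
        replace hx : x ∈ π.overl.erase (Nmax π) := hx
        replace hy : y ∈ (Nmax π) ::ₘ π.plain := hy
        have hx' := Finset.mem_of_mem_erase hx
        rcases Multiset.mem_cons.mp hy with rfl | h
        · exact hS.2 x hx' _ (Nmax_mem hp)
        · exact hS.2 x hx' y h
    · have hpsi : psi π = moveToOver π (Nmax π) hs (Nmax_mem hp) := by
        rw [psi, dif_neg hp, dif_neg hs]
      rw [hpsi]
      constructor
      · intro x hx y hy
        exact hS.1 x (Multiset.mem_of_mem_erase hx) y (Multiset.mem_of_mem_erase hy)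
      · intro x hx y hy
        replace hx : x ∈ insert (Nmax π) π.overl := hx
        have hy' := Multiset.mem_of_mem_erase hy
        rcases Finset.mem_insert.mp hx with rfl | h
        · exact le_Nmax hy'
        · exact hS.2 x h y hy'

lemma psi_sign (honempty : π.plain = 0 → π.overl.Nonempty) :
    (-1 : ℤ) ^ π.overl.card + (-1 : ℤ) ^ (psi π).overl.card = 0 := by
  by_cases hp : π.plain = 0
  · have ho : π.overl.Nonempty := honempty hp
    have hpsi : psi π = moveToPlain π (π.overl.min' ho) (Finset.min'_mem _ ho) := by
      rw [psi, dif_pos hp, dif_pos ho]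
    rw [hpsi]
    show _ + (-1:ℤ) ^ (π.overl.erase (π.overl.min' ho)).card = 0
    have hc : π.overl.card = (π.overl.erase (π.overl.min' ho)).card + 1 := by
      rw [Finset.card_erase_of_mem (Finset.min'_mem _ ho)]
      have := Finset.card_pos.mpr ho
      omega
    rw [hc, pow_succ]; ring
  · by_cases hs : Nmax π ∈ π.overl
    · have hpsi : psi π = moveToPlain π (Nmax π) hs := by rw [psi, dif_neg hp, dif_pos hs]
      rw [hpsi]
      show _ + (-1:ℤ) ^ (π.overl.erase (Nmax π)).card = 0
      have hc : π.overl.card = (π.overl.erase (Nmax π)).card + 1 := by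
        rw [Finset.card_erase_of_mem hs]
        have := Finset.card_pos.mpr ⟨_, hs⟩
        omega
      rw [hc, pow_succ]; ring
    · have hpsi : psi π = moveToOver π (Nmax π) hs (Nmax_mem hp) := by
        rw [psi, dif_neg hp, dif_neg hs]
      rw [hpsi]
      show _ + (-1:ℤ) ^ (insert (Nmax π) π.overl).card = 0
      rw [Finset.card_insert_of_notMem hs, pow_succ]; ring

lemma lOltN'_of_inS (hS : inS π) (hp : π.plain ≠ 0) : lOltN' π = 0 := by
  rw [lOltN', if_neg hp, Finset.card_eq_zero, Finset.filter_eq_empty_iff]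
  rintro x hx ⟨y, hy, hxy⟩
  exact absurd (hS.2 x hx y hy) (by omega)

end Psi

end StmtAux

theorem stmt_11 (n : ℕ) (hn : 1 ≤ n) :
    (Nat.card {π : Overpartition n // Even (lOltN π)} : ℤ) -
      Nat.card {π : Overpartition n // Odd (lOltN π)} =
    2 * Nat.card {lam : Overpartition n // lam.plain ≠ 0 ∧
        (∀ x ∈ lam.plain, ∀ y ∈ lam.plain, x = y) ∧
        (∀ x ∈ lam.overl, ∀ y ∈ lam.plain, y ≤ x) ∧
        Odd lam.overl.card} := by
  classical
  haveI : Fintype (Overpartition n) := Fintype.ofFinite _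
  have hll : ∀ π : Overpartition n, lOltN π = StmtAux.lOltN' π := fun π => rfl
  set f : Overpartition n → ℤ := fun π => (-1) ^ (lOltN π) with hf
  have hpne : ∀ π : Overpartition n, (-1:ℤ) ^ (lOltN π) ≠ 0 := fun π => pow_ne_zero _ (by norm_num)
  have hone : ∀ π : Overpartition n, π.plain = 0 → π.overl.Nonempty := by
    intro π hp
    rcases Finset.eq_empty_or_nonempty π.overl with he | h
    · exfalso
      have hs := π.sum_eq
      rw [he, hp] at hs
      simp at hs
      omega
    · exact h
  -- Part A: the sum over the non-inS part vanishes
  have hA : ∑ π ∈ (Finset.univ : Finset (Overpartition n)).filter (fun π => ¬ StmtAux.inS π), f π = 0 := by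
    apply Finset.sum_involution (fun a _ => StmtAux.phi a)
    · intro a ha
      have hna : ¬ StmtAux.inS a := (Finset.mem_filter.mp ha).2
      simpa [hf, hll] using StmtAux.phi_sign hna
    · intro a ha hfa heq
      have hna : ¬ StmtAux.inS a := (Finset.mem_filter.mp ha).2
      have hsgn := StmtAux.phi_sign hna
      rw [heq] at hsgn
      have : (-1:ℤ) ^ StmtAux.lOltN' a = 0 := by omega
      exact (hpne a) (by rw [hll]; exact this)
    · intro a ha
      have hna : ¬ StmtAux.inS a := (Finset.mem_filter.mp ha).2
      exact Finset.mem_filter.mpr ⟨Finset.mem_univ _, StmtAux.phi_not_inS hna⟩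
    · intro a ha
      have hna : ¬ StmtAux.inS a := (Finset.mem_filter.mp ha).2
      exact StmtAux.phi_phi (StmtAux.lowSet_nonempty_of_not_inS hna)
  -- Part B0: signed by #over, the sum over inS vanishes
  have hB0 : ∑ π ∈ (Finset.univ : Finset (Overpartition n)).filter (fun π => StmtAux.inS π),
      (-1:ℤ) ^ π.overl.card = 0 := by
    apply Finset.sum_involution (fun a _ => StmtAux.psi a)
    · intro a _
      exact StmtAux.psi_sign (hone a)
    · intro a _ hfa heq
      have hsgn := StmtAux.psi_sign (π := a) (hone a)
      rw [heq] at hsgn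
      have : (-1:ℤ) ^ a.overl.card = 0 := by omega
      exact pow_ne_zero _ (by norm_num : (-1:ℤ) ≠ 0) this
    · intro a ha
      have hsa : StmtAux.inS a := (Finset.mem_filter.mp ha).2
      exact Finset.mem_filter.mpr ⟨Finset.mem_univ _, StmtAux.psi_inS hsa⟩
    · intro a ha
      have hsa : StmtAux.inS a := (Finset.mem_filter.mp ha).2
      exact StmtAux.psi_psi hsa (hone a)
  set Q : Overpartition n → Prop := fun lam => lam.plain ≠ 0 ∧
      (∀ x ∈ lam.plain, ∀ y ∈ lam.plain, x = y) ∧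
      (∀ x ∈ lam.overl, ∀ y ∈ lam.plain, y ≤ x) ∧
      Odd lam.overl.card with hQdef
  -- pointwise difference on inS
  have hpt : ∀ π : Overpartition n, StmtAux.inS π →
      f π - (-1:ℤ) ^ π.overl.card = if Q π then 2 else 0 := by
    intro π hSπ
    by_cases hp : π.plain = 0
    · have h1 : f π = (-1:ℤ) ^ π.overl.card := by
        simp only [hf, lOltN, if_pos hp]
      rw [h1, sub_self, if_neg (by simp [hQdef, hp])]
    · have h1 : f π = 1 := by
        rw [hf]
        simp only
        rw [hll, StmtAux.lOltN'_of_inS hSπ hp, pow_zero]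
      rw [h1]
      by_cases hodd : Odd π.overl.card
      · rw [Odd.neg_one_pow hodd, if_pos ⟨hp, hSπ.1, hSπ.2, hodd⟩]
        norm_num
      · have heven : Even π.overl.card := Nat.not_odd_iff_even.mp hodd
        rw [Even.neg_one_pow heven, if_neg (by simp [hQdef]; tauto)]
        norm_num
  -- Part B: sum over inS equals 2 * #Q
  have hB : ∑ π ∈ (Finset.univ : Finset (Overpartition n)).filter (fun π => StmtAux.inS π), f π
      = 2 * ((Finset.univ.filter Q).card : ℤ) := by
    have hsplit : ∑ π ∈ (Finset.univ : Finset (Overpartition n)).filter (fun π => StmtAux.inS π), f π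
        = ∑ π ∈ (Finset.univ : Finset (Overpartition n)).filter (fun π => StmtAux.inS π), (f π - (-1:ℤ) ^ π.overl.card)
          + ∑ π ∈ (Finset.univ : Finset (Overpartition n)).filter (fun π => StmtAux.inS π), (-1:ℤ) ^ π.overl.card := by
      rw [← Finset.sum_add_distrib]
      apply Finset.sum_congr rfl
      intro x _
      ring
    rw [hsplit, hB0, add_zero]
    have h2 : ∑ π ∈ (Finset.univ : Finset (Overpartition n)).filter (fun π => StmtAux.inS π), (f π - (-1:ℤ) ^ π.overl.card)
        = ∑ π ∈ (Finset.univ : Finset (Overpartition n)).filter (fun π => StmtAux.inS π), (if Q π then (2:ℤ) else 0) := by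
      apply Finset.sum_congr rfl
      intro x hx
      exact hpt x (Finset.mem_filter.mp hx).2
    rw [h2, ← Finset.sum_filter, Finset.filter_filter]
    rw [Finset.sum_const, nsmul_eq_mul, mul_comm]
    congr 2
    apply congrArg
    apply Finset.filter_congr
    intro x _
    simp only [hQdef, StmtAux.inS]
    tauto
  -- total sum
  have htot : ∑ π : Overpartition n, f π = 2 * ((Finset.univ.filter Q).card : ℤ) := by
    rw [← Finset.sum_filter_add_sum_filter_not Finset.univ (fun π => StmtAux.inS π), hA, hB]
    ring
  -- LHS as the total sum
  have hEO : ∑ π : Overpartition n, f π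
      = ((Finset.univ.filter (fun π : Overpartition n => Even (lOltN π))).card : ℤ)
        - ((Finset.univ.filter (fun π : Overpartition n => Odd (lOltN π))).card : ℤ) := by
    rw [← Finset.sum_filter_add_sum_filter_not Finset.univ (fun π => Even (lOltN π))]
    have h1 : ∑ π ∈ Finset.univ.filter (fun π : Overpartition n => Even (lOltN π)), f π
        = ((Finset.univ.filter (fun π : Overpartition n => Even (lOltN π))).card : ℤ) := by
      rw [Finset.sum_congr rfl (fun x hx => Even.neg_one_pow (Finset.mem_filter.mp hx).2)]
      simp
    have h2 : ∑ π ∈ Finset.univ.filter (fun π : Overpartition n => ¬ Even (lOltN π)), f π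
        = -((Finset.univ.filter (fun π : Overpartition n => Odd (lOltN π))).card : ℤ) := by
      have hfe : Finset.univ.filter (fun π : Overpartition n => ¬ Even (lOltN π))
          = Finset.univ.filter (fun π : Overpartition n => Odd (lOltN π)) := by
        apply Finset.filter_congr
        intro x _
        exact Nat.not_even_iff_odd
      rw [hfe, Finset.sum_congr rfl (fun x hx => Odd.neg_one_pow (Finset.mem_filter.mp hx).2)]
      simp
    rw [h1, h2]
    ring
  -- convert Nat.card to filter cards
  have hc1 : (Nat.card {π : Overpartition n // Even (lOltN π)} : ℤ)
      = ((Finset.univ.filter (fun π : Overpartition n => Even (lOltN π))).card : ℤ) := by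
    rw [Nat.card_eq_fintype_card, Fintype.card_subtype]
  have hc2 : (Nat.card {π : Overpartition n // Odd (lOltN π)} : ℤ)
      = ((Finset.univ.filter (fun π : Overpartition n => Odd (lOltN π))).card : ℤ) := by
    rw [Nat.card_eq_fintype_card, Fintype.card_subtype]
  have hc3 : (Nat.card {lam : Overpartition n // Q lam} : ℤ)
      = ((Finset.univ.filter Q).card : ℤ) := by
    rw [Nat.card_eq_fintype_card, Fintype.card_subtype]
  rw [hc1, hc2, ← hEO, htot, ← hc3]
end

section
/- As formal power series in q, Σ_{n≥1} q^{2n}/((1-q^{2n})·(q;q)_{n-1}) = Σ_{n≥1} p^e(n) q^n, where p^e(n) is the number of partitions of n whose largest part appears an even number of times and (q;q)_{n-1} = ∏_{i=1}^{n-1}(1-q^i). -/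
/-!
For `k ≥ 1` compare two families of partitions: those whose parts are all `< k`, and those whose
parts are all `≤ k` with the part `k` occurring an even number of times. By the product formula
for partition generating functions these have generating functions `1/(q;q)_{k-1}` and
`1/((1-q^{2k})(q;q)_{k-1})`. Their difference is the `k`-th summand `q^{2k}/((1-q^{2k})(q;q)_{k-1})`,
and it counts the partitions whose largest part is `k` and occurs a positive even number of times.
Summing over the largest part `k` gives `p^e(n)`.
-/

open PowerSeries Finset
open scoped PowerSeries.WithPiTopology

namespace PowerSeries.WithPiTopology

variable {R : Type*} [CommRing R] [TopologicalSpace R] [IsTopologicalRing R] [T2Space R]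

theorem one_add_tsum_boole_mul_one_sub_X_pow {P : ℕ → Prop} [DecidablePred P] {d i : ℕ}
    (hP : ∀ c, P c ↔ d ∣ c) (hd : d ≠ 0) (hi : i ≠ 0) :
    (1 + ∑' j, (if P (j + 1) then (1 : R) else 0) • (X : R⟦X⟧) ^ (i * (j + 1))) *
      (1 - X ^ (d * i)) = 1 := by
  set g : ℕ → R⟦X⟧ := fun c ↦ (if P c then (1 : R) else 0) • X ^ (i * c)
  have hgeom : HasSum (fun m ↦ (X ^ (d * i) : R⟦X⟧) ^ m) (∑' m, (X ^ (d * i) : R⟦X⟧) ^ m) :=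
    (summable_pow_of_constantCoeff_eq_zero (by simp [hi, hd])).hasSum
  have hg : HasSum g (∑' m, (X ^ (d * i) : R⟦X⟧) ^ m) := by
    rw [← (mul_right_injective₀ hd).hasSum_iff]
    · convert hgeom using 2 with m
      simp only [g, hP, Function.comp_apply, dvd_mul_right, if_true, one_smul]
      ring
    · intro c hc
      simp only [Set.mem_range, not_exists] at hc
      simp [g, hP, dvd_def, fun m ↦ Ne.symm (hc m)]
  rw [((hasSum_nat_add_iff' 1).mpr hg).tsum_eq]
  simpa [g, hP] using tsum_pow_mul_one_sub_of_constantCoeff_eq_zero (by simp [hi, hd])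

end PowerSeries.WithPiTopology

theorem Multiset.forall_lt_or_eq_and_even_count_iff {s : Multiset ℕ} {k : ℕ} :
    (∀ i ∈ s, i < k ∨ i = k ∧ Even (s.count i)) ↔
      (∀ i ∈ s, i < k) ∨ (Even (s.count s.sup) ∧ s.sup = k) := by
  constructor
  · intro h
    by_cases hks : k ∈ s
    · have hsup : s.sup = k :=
        le_antisymm (sup_le.mpr fun i hi ↦ (h i hi).elim le_of_lt (·.1.le)) (le_sup hks)
      exact .inr ⟨hsup ▸ ((h k hks).resolve_left (lt_irrefl k)).2, hsup⟩
    · exact .inl fun i hi ↦ (h i hi).resolve_right fun h' ↦ hks (h'.1 ▸ hi)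
  · rintro (h | ⟨heven, hsup⟩) i hi
    · exact .inl (h i hi)
    · rcases (hsup ▸ le_sup hi : i ≤ k).lt_or_eq with hlt | rfl
      · exact .inl hlt
      · exact .inr ⟨rfl, hsup ▸ heven⟩

namespace Nat.Partition

variable {R : Type*} [CommSemiring R]

theorem coeff_genFun_boole (P : ℕ → ℕ → Prop) [∀ i c, Decidable (P i c)] (n : ℕ) :
    coeff n (genFun fun i c ↦ if P i c then (1 : R) else 0) =
      #{p : n.Partition | ∀ i ∈ p.parts, P i (p.parts.count i)} := by
  simp_rw [coeff_genFun, card_filter, Finsupp.prod, prod_boole]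
  simp

theorem genFun_eq_prod_Icc [TopologicalSpace R] [T2Space R] {f : ℕ → ℕ → R} {k : ℕ}
    (hf : ∀ i, k < i → ∀ c, f i c = 0) :
    genFun f = ∏ i ∈ Icc 1 k, (1 + ∑' j, f i (j + 1) • X ^ (i * (j + 1))) := by
  rw [← (hasProd_genFun f).tprod_eq, tprod_eq_prod (s := range k)]
  · rw [range_eq_Ico, prod_Ico_add' (fun i ↦ 1 + ∑' j, f i (j + 1) • (X : R⟦X⟧) ^ (i * (j + 1)))]
    rfl
  · intro i hi
    simp [hf (i + 1) (by simpa using hi)]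

theorem sup_parts_mem_Icc {n : ℕ} (hn : 1 ≤ n) (p : n.Partition) :
    p.parts.sup ∈ Icc 1 n := by
  have hne : p.parts ≠ 0 := by
    rintro h
    have := p.parts_sum
    simp [h] at this
    omega
  obtain ⟨a, ha⟩ := Multiset.exists_mem_of_ne_zero hne
  exact mem_Icc.mpr ⟨(p.parts_pos ha).trans_le (Multiset.le_sup ha),
    Multiset.sup_le.mpr fun _ ↦ le_of_mem_parts⟩

theorem card_forall_lt_or_eq_and_even_count (n : ℕ) {k : ℕ} (hk : 0 < k) :
    #{p : n.Partition | ∀ i ∈ p.parts, i < k ∨ i = k ∧ Even (p.parts.count i)} =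
      #{p : n.Partition | ∀ i ∈ p.parts, i < k} +
        #{p : n.Partition | Even (p.parts.count p.parts.sup) ∧ p.parts.sup = k} := by
  simp_rw [Multiset.forall_lt_or_eq_and_even_count_iff, filter_or]
  refine card_union_of_disjoint (disjoint_filter.mpr fun p _ hlt htop ↦ ?_)
  have : p.parts.sup ≤ k - 1 := Multiset.sup_le.mpr fun i hi ↦ Nat.le_sub_one_of_lt (hlt i hi)
  omega

open PowerSeries.WithPiTopology in
theorem coeff_X_pow_mul_inv_mul_inv_prod {K : Type*} [Field K] {k : ℕ} (hk : 0 < k) (n : ℕ) :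
    coeff n (X ^ (2 * k) * (1 - X ^ (2 * k))⁻¹ * (∏ i ∈ Icc 1 (k - 1), (1 - X ^ i))⁻¹ : K⟦X⟧) =
      #{p : n.Partition | Even (p.parts.count p.parts.sup) ∧ p.parts.sup = k} := by
  obtain ⟨m, rfl⟩ := Nat.exists_eq_add_one_of_ne_zero hk.ne'
  rw [Nat.add_sub_cancel]
  -- the product formula `hasProd_genFun` needs some T2 topology on `K`; the discrete one will do
  let _ : TopologicalSpace K := ⊥
  have _ : DiscreteTopology K := ⟨rfl⟩
  set P : K⟦X⟧ := ∏ i ∈ Icc 1 m, (1 - X ^ i)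
  set A := genFun fun i c ↦ if i < m + 1 ∨ i = m + 1 ∧ Even c then (1 : K) else 0 with hA
  set B := genFun fun i _ ↦ if i < m + 1 then (1 : K) else 0 with hB
  have hAP : A * P * (1 - X ^ (2 * (m + 1))) = 1 := by
    rw [hA, genFun_eq_prod_Icc (k := m + 1) fun i hi c ↦ by simp [hi.not_gt, hi.ne'],
      prod_Icc_succ_top (by omega), mul_right_comm _ _ P, mul_assoc, ← prod_mul_distrib,
      prod_eq_one fun i hi ↦ ?_, one_mul]
    · exact one_add_tsum_boole_mul_one_sub_X_pow
        (P := fun c ↦ m + 1 < m + 1 ∨ m + 1 = m + 1 ∧ Even c)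
        (by simp [even_iff_two_dvd]) two_ne_zero m.succ_ne_zero
    · have hi' := mem_Icc.mp hi
      simpa using one_add_tsum_boole_mul_one_sub_X_pow (R := K)
        (P := fun c ↦ i < m + 1 ∨ i = m + 1 ∧ Even c) (d := 1)
        (by simp [Nat.lt_succ_of_le hi'.2]) one_ne_zero (by omega)
  have hBP : B * P = 1 := by
    rw [hB, genFun_eq_prod_Icc (k := m) fun i hi c ↦ by simp; omega, ← prod_mul_distrib]
    refine prod_eq_one fun i hi ↦ ?_
    have hi' := mem_Icc.mp hi
    simpa using one_add_tsum_boole_mul_one_sub_X_pow (R := K) (P := fun _ ↦ i < m + 1)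
      (d := 1) (by simp [Nat.lt_succ_of_le hi'.2]) one_ne_zero (by omega)
  have hP : constantCoeff P ≠ 0 := by
    rw [map_prod]
    exact prod_ne_zero_iff.mpr fun i hi ↦ by
      simp [zero_pow (Nat.one_le_iff_ne_zero.mp (mem_Icc.mp hi).1)]
  have hY := PowerSeries.mul_inv_cancel (1 - X ^ (2 * (m + 1)) : K⟦X⟧) (by simp)
  have hterm : X ^ (2 * (m + 1)) * (1 - X ^ (2 * (m + 1)))⁻¹ * P⁻¹ = A - B := by
    rw [← (PowerSeries.eq_inv_iff_mul_eq_one hP).mpr hBP]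
    linear_combination (A * B * P - B) * hY + A * hBP - (1 - X ^ (2 * (m + 1)))⁻¹ * B * hAP
  rw [hterm, map_sub, hA, hB, coeff_genFun_boole, coeff_genFun_boole,
    card_forall_lt_or_eq_and_even_count n hk]
  push_cast
  ring

end Nat.Partition

/-- As formal power series (coefficientwise, over ℚ; terms with `2k > n` do not
contribute to the coefficient of `q^n`):
`Σ_{k≥1} q^{2k}/((1-q^{2k})·(q;q)_{k-1}) = Σ_{n≥1} p^e(n) q^n`,
where `p^e(n)` counts partitions of `n` whose largest part appears an even
number of times. -/
theorem stmt_14 (n : ℕ) (hn : 1 ≤ n) :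
    (PowerSeries.coeff (R := ℚ) n)
      (∑ k ∈ Finset.Icc 1 n,
        PowerSeries.X ^ (2 * k) * (1 - PowerSeries.X ^ (2 * k))⁻¹ *
          (∏ i ∈ Finset.Icc 1 (k - 1), (1 - PowerSeries.X ^ i))⁻¹) =
    Nat.card {p : n.Partition // Even (p.parts.count p.parts.sup)} := by
  rw [map_sum, sum_congr rfl fun k hk ↦
      Nat.Partition.coeff_X_pow_mul_inv_mul_inv_prod (mem_Icc.mp hk).1 n,
    Nat.card_eq_fintype_card, Fintype.card_subtype,
    card_eq_sum_card_fiberwise fun p _ ↦ Nat.Partition.sup_parts_mem_Icc hn p]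
  simp_rw [filter_filter]
  push_cast
  rfl
end

section
/- For every n ≥ 1, the number of overpartitions π of n such that ℓ_{O≥N}(π) is even equals the number of overpartitions λ of n such that ℓ_{O≤N}(λ) is even (and likewise with 'even' replaced by 'odd'). Here, for an overpartition with a non-overlined part, ℓ_{O≥N} counts overlined parts of size ≥ the smallest non-overlined part and ℓ_{O≤N} counts overlined parts of size ≤ the largest non-overlined part; for an overpartition with no non-overlined parts, both quantities equal the total number of parts. -/
open scoped Classical

/-- Number of overlined parts of size at least the smallest non-overlined part;
the total number of parts if there is no non-overlined part. -/
noncomputable def lOgeN {n : ℕ} (π : Overpartition n) : ℕ :=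
  if π.plain = 0 then π.overl.card
  else (π.overl.filter (fun x => ∃ y ∈ π.plain, y ≤ x)).card

/-- Number of overlined parts of size at most the largest non-overlined part;
the total number of parts if there is no non-overlined part. -/
noncomputable def lOleN {n : ℕ} (π : Overpartition n) : ℕ :=
  if π.plain = 0 then π.overl.card
  else (π.overl.filter (fun x => ∃ y ∈ π.plain, x ≤ y)).card


/-!
An overpartition of `n` is a partition of `n` together with a splitting of its multiset of parts
`μ` into a set of overlined parts and a multiset of plain parts, so it suffices to show that the
signed count `∑ (-1) ^ ℓ` over the splittings of each `μ` is the same for both statistics.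
Splittings without plain parts contribute the same to both. On the others, moving the largest
part `a` of `μ` between the overlined and the plain parts is an involution that changes
`ℓ_{O≥N}` by one, except at the splitting whose only plain part is `a` and in which `a` is not
overlined; it has `ℓ_{O≥N} = 0` and exists iff the parts of `μ` are distinct. So this signed
count does not depend on the order of `ℕ`, while `ℓ_{O≤N}` is `ℓ_{O≥N}` for the reversed order.
Equal signed counts and equal totals give equal counts of each parity.
-/

open Finset

lemma sum_neg_one_pow_eq_card_even_sub_card_odd {ι : Type*} [Fintype ι] (f : ι → ℕ) :
    ∑ i, (-1 : ℤ) ^ f i = Nat.card {i // Even (f i)} - Nat.card {i // Odd (f i)} := by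
  simp only [neg_one_pow_eq_ite, sum_ite, sum_const, Nat.card_eq_fintype_card,
    Fintype.card_subtype, Nat.not_even_iff_odd]
  ring

lemma card_even_add_card_odd {ι : Type*} [Fintype ι] (f : ι → ℕ) :
    Nat.card {i // Even (f i)} + Nat.card {i // Odd (f i)} = Nat.card ι := by
  simp only [Nat.card_eq_fintype_card, Fintype.card_subtype, ← Nat.not_even_iff_odd,
    card_filter_add_card_filter_not, card_univ]

section Splittings

variable {α : Type*}

section DecidableEq

variable [DecidableEq α] {a : α} {μ : Multiset α} {p : Finset α × Multiset α}

def splittings (μ : Multiset α) : Finset (Finset α × Multiset α) :=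
  (μ.toFinset.powerset ×ˢ μ.powerset.toFinset).filter fun p => p.1.val + p.2 = μ

@[simp]
lemma mem_splittings : p ∈ splittings μ ↔ p.1.val + p.2 = μ := by
  refine ⟨fun h => (mem_filter.1 h).2, fun h => mem_filter.2 ⟨?_, h⟩⟩
  subst h
  simp only [mem_product, mem_powerset, Multiset.mem_toFinset, Multiset.mem_powerset]
  exact ⟨fun x hx => Multiset.mem_toFinset.2 (Multiset.mem_add.2 (.inl hx)),
    Multiset.le_add_left _ _⟩

lemma mem_or_mem_of_mem_splittings (hp : p ∈ splittings μ) (ha : a ∈ μ) : a ∈ p.1 ∨ a ∈ p.2 := by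
  rwa [← mem_splittings.1 hp, Multiset.mem_add] at ha

def toggle (a : α) (p : Finset α × Multiset α) : Finset α × Multiset α :=
  if a ∈ p.1 then (p.1.erase a, a ::ₘ p.2) else (insert a p.1, p.2.erase a)

lemma toggle_of_mem (h : a ∈ p.1) : toggle a p = (p.1.erase a, a ::ₘ p.2) := if_pos h

lemma toggle_of_notMem (h : a ∉ p.1) : toggle a p = (insert a p.1, p.2.erase a) := if_neg h

lemma mem_toggle_fst_iff : a ∈ (toggle a p).1 ↔ a ∉ p.1 := by
  by_cases ha : a ∈ p.1
  · simp [toggle_of_mem ha, ha]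
  · simp [toggle_of_notMem ha, ha]

lemma toggle_toggle (h : a ∈ p.1 ∨ a ∈ p.2) : toggle a (toggle a p) = p := by
  by_cases ha : a ∈ p.1
  · rw [toggle_of_mem ha, toggle_of_notMem (notMem_erase a _), insert_erase ha,
      Multiset.erase_cons_head]
  · rw [toggle_of_notMem ha, toggle_of_mem (mem_insert_self a _), erase_insert ha,
      Multiset.cons_erase (h.resolve_left ha)]

lemma toggle_mem_splittings (hp : p ∈ splittings μ) (ha : a ∈ μ) : toggle a p ∈ splittings μ := by
  have hap := mem_or_mem_of_mem_splittings hp ha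
  rw [mem_splittings] at hp ⊢
  by_cases has : a ∈ p.1
  · rw [toggle_of_mem has, erase_val, Multiset.add_cons, ← Multiset.cons_add,
      Multiset.cons_erase (mem_def.1 has), hp]
  · rw [toggle_of_notMem has, insert_val_of_notMem has, Multiset.cons_add, ← Multiset.add_cons,
      Multiset.cons_erase (hap.resolve_left has), hp]

lemma toggle_snd_eq_zero_iff (h : a ∈ p.1 ∨ a ∈ p.2) :
    (toggle a p).2 = 0 ↔ a ∉ p.1 ∧ p.2 = {a} := by
  by_cases has : a ∈ p.1
  · simp [toggle_of_mem has, has]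
  · rw [toggle_of_notMem has]
    constructor
    · intro h0
      refine ⟨has, ?_⟩
      rw [← Multiset.cons_erase (h.resolve_left has), show p.2.erase a = 0 from h0]
      rfl
    · rintro ⟨-, h1⟩
      simp [h1]

lemma filter_toggle_snd_eq_zero (ha : a ∈ μ) :
    (splittings μ).filter (fun p => p.2 ≠ 0 ∧ (toggle a p).2 = 0) =
      if μ.Nodup then {(μ.toFinset.erase a, {a})} else ∅ := by
  ext ⟨s, m⟩
  rw [mem_filter, and_congr_right fun hp => by
    rw [toggle_snd_eq_zero_iff (mem_or_mem_of_mem_splittings hp ha)]]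
  simp only [mem_splittings]
  split_ifs with hμ
  · rw [mem_singleton, Prod.mk.injEq]
    constructor
    · rintro ⟨hsum, -, has, rfl⟩
      refine ⟨ext fun x => ?_, rfl⟩
      rw [mem_erase, Multiset.mem_toFinset, ← hsum, Multiset.mem_add, mem_val,
        Multiset.mem_singleton]
      exact ⟨fun hx => ⟨ne_of_mem_of_not_mem hx has, .inl hx⟩,
        fun ⟨hxa, hx⟩ => hx.resolve_right hxa⟩
    · rintro ⟨rfl, rfl⟩
      refine ⟨?_, Multiset.singleton_ne_zero a, notMem_erase a _, rfl⟩
      rw [erase_val, Multiset.toFinset_val, hμ.dedup, add_comm, Multiset.singleton_add,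
        Multiset.cons_erase ha]
  · simp only [notMem_empty, iff_false]
    rintro ⟨hsum, -, has, rfl⟩
    rw [← hsum, add_comm, Multiset.singleton_add] at hμ
    exact hμ (Multiset.nodup_cons.2 ⟨has, s.nodup⟩)

end DecidableEq

variable [LinearOrder α]

noncomputable def aboveCount (s : Finset α) (m : Multiset α) : ℕ :=
  if m = 0 then s.card else (s.filter fun x => ∃ y ∈ m, y ≤ x).card

lemma aboveCount_eq_add_one_of_mem {a : α} {s : Finset α} {m : Multiset α} (has : a ∈ s)
    (hm : m ≠ 0) (hs : ∀ x ∈ s, x ≤ a) (hma : ∀ y ∈ m, y ≤ a) :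
    aboveCount s m = aboveCount (s.erase a) (a ::ₘ m) + 1 := by
  rw [aboveCount, if_neg hm, aboveCount, if_neg (Multiset.cons_ne_zero)]
  have hcons : (s.erase a).filter (fun x => ∃ y ∈ a ::ₘ m, y ≤ x) =
      (s.erase a).filter (fun x => ∃ y ∈ m, y ≤ x) := by
    refine filter_congr fun x hx => ?_
    obtain ⟨hxa, hxs⟩ := mem_erase.1 hx
    simp only [Multiset.mem_cons, exists_eq_or_imp, or_iff_right_iff_imp]
    exact fun hax => absurd (le_antisymm (hs x hxs) hax) hxa
  obtain ⟨y, hy⟩ := Multiset.exists_mem_of_ne_zero hm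
  rw [hcons, filter_erase, card_erase_add_one (mem_filter.2 ⟨has, y, hy, hma y hy⟩)]

lemma aboveCount_singleton_eq_zero {a : α} {s : Finset α} (hs : ∀ x ∈ s, x < a) :
    aboveCount s {a} = 0 := by
  rw [aboveCount, if_neg (Multiset.singleton_ne_zero a), card_eq_zero, filter_eq_empty_iff]
  simpa using hs

section Toggle

variable {a : α} {μ : Multiset α} {p : Finset α × Multiset α}

lemma neg_one_pow_aboveCount_toggle (hp : p ∈ splittings μ) (ha : a ∈ μ) (hmax : ∀ x ∈ μ, x ≤ a)
    (hm : p.2 ≠ 0) (hm' : (toggle a p).2 ≠ 0) :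
    (-1 : ℤ) ^ aboveCount (toggle a p).1 (toggle a p).2 = -(-1) ^ aboveCount p.1 p.2 := by
  have key : ∀ q ∈ splittings μ, a ∈ q.1 → q.2 ≠ 0 →
      aboveCount q.1 q.2 = aboveCount (toggle a q).1 (toggle a q).2 + 1 := by
    intro q hq haq hq0
    rw [← mem_splittings.1 hq] at hmax
    rw [toggle_of_mem haq]
    exact aboveCount_eq_add_one_of_mem haq hq0
      (fun x hx => hmax x (Multiset.mem_add.2 (.inl hx)))
      (fun y hy => hmax y (Multiset.mem_add.2 (.inr hy)))
  by_cases has : a ∈ p.1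
  · rw [key p hp has hm, pow_succ]
    ring
  · have hq := key (toggle a p) (toggle_mem_splittings hp ha) (mem_toggle_fst_iff.2 has) hm'
    rw [toggle_toggle (mem_or_mem_of_mem_splittings hp ha)] at hq
    rw [hq, pow_succ]
    ring

lemma sum_neg_one_pow_aboveCount_filter_toggle_ne_zero (ha : a ∈ μ) (hmax : ∀ x ∈ μ, x ≤ a) :
    ∑ p ∈ splittings μ with p.2 ≠ 0 ∧ (toggle a p).2 ≠ 0, (-1 : ℤ) ^ aboveCount p.1 p.2 = 0 := by
  refine sum_involution (fun p _ => toggle a p) (fun p hp => ?_) (fun p hp _ => ?_)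
    (fun p hp => ?_)
    (fun p hp => toggle_toggle (mem_or_mem_of_mem_splittings (mem_filter.1 hp).1 ha))
  all_goals obtain ⟨hp, hm, hm'⟩ := mem_filter.1 hp
  · rw [neg_one_pow_aboveCount_toggle hp ha hmax hm hm', add_neg_cancel]
  · exact fun h => iff_not_self (h ▸ mem_toggle_fst_iff (a := a) (p := p))
  · rw [mem_filter, toggle_toggle (mem_or_mem_of_mem_splittings hp ha)]
    exact ⟨toggle_mem_splittings hp ha, hm', hm⟩

lemma sum_neg_one_pow_aboveCount_filter_snd_ne_zero (ha : a ∈ μ) (hmax : ∀ x ∈ μ, x ≤ a) :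
    ∑ p ∈ splittings μ with p.2 ≠ 0, (-1 : ℤ) ^ aboveCount p.1 p.2 = if μ.Nodup then 1 else 0 := by
  rw [← sum_filter_not_add_sum_filter _ (fun p => (toggle a p).2 = 0), filter_filter,
    filter_filter, sum_neg_one_pow_aboveCount_filter_toggle_ne_zero ha hmax, zero_add,
    filter_toggle_snd_eq_zero ha]
  split_ifs
  · rw [sum_singleton, aboveCount_singleton_eq_zero, pow_zero]
    intro x hx
    obtain ⟨hxa, hxμ⟩ := mem_erase.1 hx
    exact lt_of_le_of_ne (hmax x (Multiset.mem_toFinset.1 hxμ)) hxa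
  · rfl

end Toggle

theorem sum_splittings_neg_one_pow_aboveCount (μ : Multiset α) :
    ∑ p ∈ splittings μ, (-1 : ℤ) ^ aboveCount p.1 p.2 =
      ∑ p ∈ splittings μ with p.2 = 0, (-1 : ℤ) ^ p.1.card + if μ.Nodup ∧ μ ≠ 0 then 1 else 0 := by
  rw [← sum_filter_add_sum_filter_not _ (fun p => p.2 = 0)]
  congr 1
  · exact sum_congr rfl fun p hp => by rw [aboveCount, if_pos (mem_filter.1 hp).2]
  · rcases eq_or_ne μ 0 with rfl | hμ
    · refine sum_eq_zero fun p hp => absurd ?_ (mem_filter.1 hp).2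
      exact (add_eq_zero.1 (mem_splittings.1 (mem_filter.1 hp).1)).2
    · have hne : μ.toFinset.Nonempty := Multiset.toFinset_nonempty.2 hμ
      rw [sum_neg_one_pow_aboveCount_filter_snd_ne_zero (Multiset.mem_toFinset.1 (max'_mem _ hne))
        fun x hx => le_max' _ x (Multiset.mem_toFinset.2 hx)]
      simp only [ne_eq, hμ, not_false_eq_true, and_true]

end Splittings

namespace Overpartition

variable {n : ℕ}

def equivSigmaSplittings : Overpartition n ≃ Σ ρ : n.Partition, splittings ρ.parts where
  toFun π :=
    ⟨{ parts := π.overl.val + π.plain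
       parts_pos := fun {i} hi => (Multiset.mem_add.1 hi).elim (π.over_pos i) (π.plain_pos i)
       parts_sum := by rw [Multiset.sum_add, sum_val]; exact π.sum_eq },
      (π.overl, π.plain), mem_splittings.2 rfl⟩
  invFun q :=
    { overl := q.2.1.1
      plain := q.2.1.2
      over_pos := fun x hx =>
        q.1.parts_pos (mem_splittings.1 q.2.2 ▸ Multiset.mem_add.2 (.inl hx))
      plain_pos := fun x hx =>
        q.1.parts_pos (mem_splittings.1 q.2.2 ▸ Multiset.mem_add.2 (.inr hx))
      sum_eq := by
        have h := q.1.parts_sum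
        rwa [← mem_splittings.1 q.2.2, Multiset.sum_add, sum_val] at h }
  left_inv π := rfl
  right_inv := fun ⟨_, ⟨_, hp⟩⟩ => by
    refine Sigma.subtype_ext ?_ rfl
    exact Nat.Partition.ext (mem_splittings.1 hp)

noncomputable instance inst_s17 : Fintype (Overpartition n) := .ofEquiv _ equivSigmaSplittings.symm

lemma sum_eq_sum_partition_sum_splittings {β : Type*} [AddCommMonoid β]
    (f : Finset ℕ × Multiset ℕ → β) :
    ∑ π : Overpartition n, f (π.overl, π.plain) =
      ∑ ρ : n.Partition, ∑ p ∈ splittings ρ.parts, f p := by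
  refine (Fintype.sum_equiv equivSigmaSplittings _ (fun q => f q.2) fun _ => rfl).trans ?_
  rw [Fintype.sum_sigma]
  exact Fintype.sum_congr _ _ fun ρ => sum_coe_sort _ f

lemma lOgeN_eq_aboveCount (π : Overpartition n) : lOgeN π = aboveCount π.overl π.plain := rfl

/-- `ℕᵒᵈ` is definitionally `ℕ` with the reversed order. -/
lemma lOleN_eq_aboveCount_orderDual (π : Overpartition n) :
    lOleN π = aboveCount (α := ℕᵒᵈ) π.overl π.plain := rfl

theorem sum_neg_one_pow_lOgeN_eq_sum_neg_one_pow_lOleN :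
    ∑ π : Overpartition n, (-1 : ℤ) ^ lOgeN π = ∑ π : Overpartition n, (-1 : ℤ) ^ lOleN π := by
  simp only [lOgeN_eq_aboveCount, lOleN_eq_aboveCount_orderDual]
  rw [sum_eq_sum_partition_sum_splittings fun p => (-1 : ℤ) ^ aboveCount p.1 p.2,
    sum_eq_sum_partition_sum_splittings fun p => (-1 : ℤ) ^ aboveCount (α := ℕᵒᵈ) p.1 p.2]
  refine Fintype.sum_congr _ _ fun ρ => ?_
  refine (sum_splittings_neg_one_pow_aboveCount ρ.parts).trans
    (.trans ?_ (sum_splittings_neg_one_pow_aboveCount (α := ℕᵒᵈ) ρ.parts).symm)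
  congr

end Overpartition

theorem stmt_17_general (n : ℕ) :
    Nat.card {π : Overpartition n // Even (lOgeN π)} =
      Nat.card {π : Overpartition n // Even (lOleN π)} ∧
    Nat.card {π : Overpartition n // Odd (lOgeN π)} =
      Nat.card {π : Overpartition n // Odd (lOleN π)} := by
  have hsum := Overpartition.sum_neg_one_pow_lOgeN_eq_sum_neg_one_pow_lOleN (n := n)
  rw [sum_neg_one_pow_eq_card_even_sub_card_odd, sum_neg_one_pow_eq_card_even_sub_card_odd] at hsum
  have hge := card_even_add_card_odd (lOgeN (n := n))
  have hle := card_even_add_card_odd (lOleN (n := n))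
  omega

theorem stmt_17 (n : ℕ) (hn : 1 ≤ n) :
    Nat.card {π : Overpartition n // Even (lOgeN π)} =
      Nat.card {π : Overpartition n // Even (lOleN π)} ∧
    Nat.card {π : Overpartition n // Odd (lOgeN π)} =
      Nat.card {π : Overpartition n // Odd (lOleN π)} :=
  stmt_17_general n
end
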